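/- arXiv:2409.00573 — 6 statements merged into one kernel-verified Lean document; each statement's English description precedes it below -/
import Mathlib

section
/- Firm uniform lower semicontinuity implies uniform lower semicontinuity: if Θ({f_t}_{t∈T}) = 0, then the family {f_t}_{t∈T} is uniformly lower semicontinuous on X, i.e., inf_X Σ̄_{t∈T} f_t ≤ Λ({f_t}_{t∈T}). -/
open scoped BigOperators
open Filter

noncomputable section

/-- Upper limit of a net indexed by the finite subsets of `T` directed by inclusion:
`limsup_{S↑T} α_S := inf over S₀ of sup over finite S ⊇ S₀ of α_S`. -/
def limsupF {T : Type*} (α : Finset T → EReal) : EReal :=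
  ⨅ S₀ : Finset T, ⨆ (S : Finset T) (_ : S₀ ⊆ S), α S

/-- Lower limit of a net indexed by the finite subsets of `T` directed by inclusion. -/
def liminfF {T : Type*} (α : Finset T → EReal) : EReal :=
  ⨆ S₀ : Finset T, ⨅ (S : Finset T) (_ : S₀ ⊆ S), α S

/-- The upper sum `(Σ̄_{t∈T} f_t)(x) := limsup_{S↑T} Σ_{t∈S} f_t(x)`. -/
def upperSum {T X : Type*} (f : T → X → EReal) (x : X) : EReal :=
  limsupF (fun S => ∑ t ∈ S, f t x)

/-- `Λ_U({f_t}_{t∈S})` for a finite `S`: the supremum over `δ > 0` of the infimum of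
`Σ_{t∈S} f_t(x_t)` over all choices `x_t ∈ U` with `diam{x_t}_{t∈S} < δ`. -/
def LambdaFin {T X : Type*} [MetricSpace X] (U : Set X) (f : T → X → EReal)
    (S : Finset T) : EReal :=
  ⨆ (δ : ℝ) (_ : 0 < δ),
    ⨅ (x : T → X) (_ : ∀ t ∈ S, x t ∈ U)
      (_ : ∀ t ∈ S, ∀ t' ∈ S, dist (x t) (x t') < δ),
      ∑ t ∈ S, f t (x t)

/-- The uniform infimum `Λ_U({f_t}_{t∈T}) := liminf_{S↑T} Λ_U({f_t}_{t∈S})`. -/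
def Lambda {T X : Type*} [MetricSpace X] (U : Set X) (f : T → X → EReal) : EReal :=
  liminfF (fun S => LambdaFin U f S)

/-- The Θ-quantity for a finite `S`, with points `x_t ∈ dom f_t ∩ V` and the inner
infimum over `x ∈ U`. -/
def ThetaFin2 {T X : Type*} [MetricSpace X] (V U : Set X) (f : T → X → EReal)
    (S : Finset T) : EReal :=
  ⨅ (δ : ℝ) (_ : 0 < δ),
    ⨆ (x : T → X) (_ : ∀ t ∈ S, x t ∈ V ∧ f t (x t) ≠ ⊤)
      (_ : ∀ t ∈ S, ∀ t' ∈ S, dist (x t) (x t') < δ),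
      ⨅ (y : X) (_ : y ∈ U),
        max (⨆ t ∈ S, (dist y (x t) : EReal))
          (upperSum f y - ∑ t ∈ S, f t (x t))

/-- `Θ_U({f_t}_{t∈T})`. -/
def Theta {T X : Type*} [MetricSpace X] (U : Set X) (f : T → X → EReal) : EReal :=
  limsupF (fun S => ThetaFin2 U U f S)

/-- The family of essentially interior subsets of `U`. -/
def EI {X : Type*} [MetricSpace X] (U : Set X) : Set (Set X) :=
  {V | V ⊆ U ∧ ∃ ρ > 0, (⋃ x ∈ V, Metric.ball x ρ) ⊆ U}

/-- The quasiuniform infimum `Λ†_U({f_t}_{t∈T}) := inf over V ∈ EI(U) of Λ_V({f_t}_{t∈T})`. -/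
def LambdaDag {T X : Type*} [MetricSpace X] (U : Set X) (f : T → X → EReal) : EReal :=
  ⨅ V ∈ EI U, Lambda V f

/-- `Θ†_U({f_t}_{t∈T})`. -/
def ThetaDag {T X : Type*} [MetricSpace X] (U : Set X) (f : T → X → EReal) : EReal :=
  ⨆ V ∈ EI U, limsupF (fun S => ThetaFin2 V U f S)

lemma sum_ne_bot_aux {T : Type*} (S : Finset T) (g : T → EReal)
    (h : ∀ t ∈ S, g t ≠ ⊥) : ∑ t ∈ S, g t ≠ ⊥ := by
  classical
  induction S using Finset.induction_on with
  | empty => simp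
  | insert a s hni ih =>
    rw [Finset.sum_insert hni]
    simp only [ne_eq, EReal.add_eq_bot_iff, not_or]
    exact ⟨h a (Finset.mem_insert_self a s),
      ih fun t ht => h t (Finset.mem_insert_of_mem ht)⟩

lemma sum_ne_top_aux {T : Type*} (S : Finset T) (g : T → EReal)
    (h : ∀ t ∈ S, g t ≠ ⊤) : ∑ t ∈ S, g t ≠ ⊤ := by
  classical
  induction S using Finset.induction_on with
  | empty => simp
  | insert a s hni ih =>
    rw [Finset.sum_insert hni]
    exact (EReal.add_lt_top (h a (Finset.mem_insert_self a s))
      (ih fun t ht => h t (Finset.mem_insert_of_mem ht))).ne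

/-- Firm uniform lower semicontinuity implies uniform lower semicontinuity:
if `Θ({f_t}) = 0` then `inf_X Σ̄_{t∈T} f_t ≤ Λ({f_t})`. -/
theorem firm_uniform_lsc_implies_uniform_lsc
    {X : Type*} [MetricSpace X] {T : Type*} [Nonempty T]
    (f : T → X → EReal)
    (hbot : ∀ t x, f t x ≠ ⊥)
    (hdom : ∃ x : X, upperSum f x ≠ ⊤)
    (hbdd : ∀ S : Finset T, (⨅ x : X, ∑ t ∈ S, f t x) ≠ ⊥)
    (hTheta : Theta (Set.univ : Set X) f = 0) :
    (⨅ x : X, upperSum f x) ≤ Lambda (Set.univ : Set X) f := by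
  classical
  set m := ⨅ x : X, upperSum f x with hm
  rw [← EReal.ge_of_forall_gt_iff_ge]
  intro c hc
  -- m is finite
  obtain ⟨x₀, hx₀⟩ := hdom
  have hmtop : m ≠ ⊤ := ne_top_of_le_ne_top hx₀ (iInf_le _ x₀)
  have hmbot : m ≠ ⊥ := fun h => absurd hc (by simp [h])
  have hmr : ((m.toReal : ℝ) : EReal) = m := EReal.coe_toReal hmtop hmbot
  set ε : ℝ := m.toReal - c with hε
  have hεpos : 0 < ε := by
    have : (c : EReal) < (m.toReal : EReal) := hmr ▸ hc
    have := EReal.coe_lt_coe_iff.mp this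
    linarith
  have hcε : (c : EReal) = m - (ε : EReal) := by
    rw [← hmr, ← EReal.coe_sub]
    norm_num [hε]
  -- extract S₀ from hTheta
  have h0ε : Theta (Set.univ : Set X) f < (ε : EReal) := by
    rw [hTheta]; exact_mod_cast hεpos
  rw [Theta, limsupF, iInf_lt_iff] at h0ε
  obtain ⟨S₀, hS₀⟩ := h0ε
  -- now bound Lambda from below
  rw [Lambda, liminfF]
  refine le_trans ?_ (le_iSup _ S₀)
  refine le_iInf fun S => le_iInf fun hSS => ?_
  -- ThetaFin2 univ univ f S < ε
  have hΘS : ThetaFin2 Set.univ Set.univ f S < (ε : EReal) :=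
    lt_of_le_of_lt (le_iSup₂_of_le S hSS le_rfl) hS₀
  rw [ThetaFin2, iInf_lt_iff] at hΘS
  obtain ⟨δ, hδ⟩ := hΘS
  rw [iInf_lt_iff] at hδ
  obtain ⟨hδpos, hδ⟩ := hδ
  -- Lambda bound at this δ
  rw [LambdaFin]
  refine le_trans ?_ (le_iSup₂_of_le δ hδpos le_rfl)
  refine le_iInf fun x => le_iInf fun hxU => le_iInf fun hxd => ?_
  by_cases htop : ∀ t ∈ S, f t (x t) ≠ ⊤
  · -- admissible point for Theta
    have hxadm : ∀ t ∈ S, x t ∈ (Set.univ : Set X) ∧ f t (x t) ≠ ⊤ :=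
      fun t ht => ⟨trivial, htop t ht⟩
    have hinner : (⨅ (y : X) (_ : y ∈ (Set.univ : Set X)),
        max (⨆ t ∈ S, (dist y (x t) : EReal))
          (upperSum f y - ∑ t ∈ S, f t (x t))) < (ε : EReal) := by
      refine lt_of_le_of_lt ?_ hδ
      refine le_iSup₂_of_le x hxadm ?_
      exact le_of_eq (iSup_pos (f := fun _ => ⨅ (y : X) (_ : y ∈ (Set.univ : Set X)),
        max (⨆ t ∈ S, (dist y (x t) : EReal))
          (upperSum f y - ∑ t ∈ S, f t (x t))) hxd).symm
    rw [iInf_lt_iff] at hinner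
    obtain ⟨y, hy⟩ := hinner
    rw [iInf_lt_iff] at hy
    obtain ⟨-, hy⟩ := hy
    have hsub : upperSum f y - ∑ t ∈ S, f t (x t) < (ε : EReal) :=
      lt_of_le_of_lt (le_max_right _ _) hy
    have hSb : (∑ t ∈ S, f t (x t)) ≠ ⊥ := sum_ne_bot_aux S _ fun t ht => hbot t (x t)
    have hSt : (∑ t ∈ S, f t (x t)) ≠ ⊤ := sum_ne_top_aux S _ htop
    have h1 : upperSum f y < (ε : EReal) + ∑ t ∈ S, f t (x t) :=
      (EReal.sub_lt_iff (Or.inl hSb) (Or.inl hSt)).mp hsub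
    have h2 : m ≤ upperSum f y := iInf_le _ y
    have h3 : m < (ε : EReal) + ∑ t ∈ S, f t (x t) := lt_of_le_of_lt h2 h1
    have h4 : m - (ε : EReal) < ∑ t ∈ S, f t (x t) := EReal.sub_lt_of_lt_add' h3
    rw [hcε]
    exact h4.le
  · -- some term is ⊤, sum is ⊤
    push_neg at htop
    obtain ⟨t₀, ht₀, ht₀top⟩ := htop
    have : ∑ t ∈ S, f t (x t) = ⊤ := by
      rw [← Finset.add_sum_erase S _ ht₀, ht₀top]
      exact EReal.top_add_of_ne_bot
        (sum_ne_bot_aux _ _ fun t ht => hbot t (x t))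
    rw [this]
    exact le_top


end
end

section
/- Adding a constant function preserves uniform and firm uniform lower semicontinuity: let t₀ ∉ T, c ∈ ℝ, and f_{t₀}(x) := c for all x ∈ X. If {f_t}_{t∈T} is uniformly lower semicontinuous on X, then {f_t}_{t∈T∪{t₀}} is uniformly lower semicontinuous on X; if {f_t}_{t∈T} is firmly uniformly lower semicontinuous on X, then {f_t}_{t∈T∪{t₀}} is firmly uniformly lower semicontinuous on X. -/
open scoped BigOperators
open Filter

noncomputable section

/-- The family `{f_t}_{t∈T∪{t₀}}` obtained by adding the constant function `c`,
indexed by `Option T` with `none` playing the role of `t₀ ∉ T`. -/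
def extendConst {T X : Type*} (f : T → X → EReal) (c : ℝ) : Option T → X → EReal :=
  fun o x => o.elim (c : EReal) (fun t => f t x)

section AuxLemmas

variable {T : Type*} {X : Type*} [MetricSpace X]

/-- Translation by a real constant as an order isomorphism of `EReal`. -/
private def ecAddIso (c : ℝ) : EReal ≃o EReal where
  toFun a := (c : EReal) + a
  invFun a := ((-c : ℝ) : EReal) + a
  left_inv a := by
    show ((-c : ℝ) : EReal) + ((c : EReal) + a) = a
    rw [← add_assoc, ← EReal.coe_add, neg_add_cancel, EReal.coe_zero, zero_add]
  right_inv a := by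
    show (c : EReal) + (((-c : ℝ) : EReal) + a) = a
    rw [← add_assoc, ← EReal.coe_add, add_neg_cancel, EReal.coe_zero, zero_add]
  map_rel_iff' := by
    intro a b
    exact ⟨fun h => (EReal.addLECancellable_coe c) h, fun h => by exact add_le_add_right h (c : EReal)⟩

private lemma ecadd_iInf (c : ℝ) {ι : Sort*} (k : ι → EReal) :
    (c : EReal) + ⨅ i, k i = ⨅ i, ((c : EReal) + k i) :=
  (ecAddIso c).map_iInf k

private lemma ecadd_iSup (c : ℝ) {ι : Sort*} (k : ι → EReal) :
    (c : EReal) + ⨆ i, k i = ⨆ i, ((c : EReal) + k i) :=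
  (ecAddIso c).map_iSup k

private lemma sum_option (k : Option T → EReal) {S : Finset (Option T)} (h : none ∈ S) :
    ∑ o ∈ S, k o = k none + ∑ t ∈ S.eraseNone, k (some t) := by
  classical
  rw [← Finset.sum_insertNone k S.eraseNone, Finset.insertNone_eraseNone,
    Finset.insert_eq_self.mpr h]

private lemma subset_insertNone {S₀ : Finset (Option T)} {S' : Finset T}
    (h : S₀.eraseNone ⊆ S') : S₀ ⊆ Finset.insertNone S' := by
  intro o ho
  rw [Finset.mem_insertNone]
  intro a ha
  exact h (Finset.mem_eraseNone.mpr ((Option.mem_def.mp ha) ▸ ho))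

private lemma eraseNone_superset {S₀' : Finset T} {S : Finset (Option T)}
    (hS : Finset.insertNone S₀' ⊆ S) : S₀' ⊆ S.eraseNone := by
  have := Finset.eraseNone.monotone hS
  rwa [Finset.eraseNone_insertNone] at this

private lemma upperSum_extend (f : T → X → EReal) (c : ℝ) (y : X) :
    upperSum (extendConst f c) y = (c : EReal) + upperSum f y := by
  classical
  unfold upperSum limsupF
  beta_reduce
  apply le_antisymm
  · rw [ecadd_iInf]
    refine le_iInf fun S₀' => ?_
    refine iInf_le_of_le (Finset.insertNone S₀') ?_
    refine iSup_le fun S => iSup_le fun hS => ?_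
    have hnone : none ∈ S := hS Finset.none_mem_insertNone
    beta_reduce
    rw [sum_option (fun o => extendConst f c o y) hnone]
    show (c : EReal) + ∑ t ∈ S.eraseNone, f t y ≤ _
    refine add_le_add_right ?_ _
    exact le_iSup₂ (f := fun (S'' : Finset T) (_ : S₀' ⊆ S'') => ∑ t ∈ S'', f t y)
      S.eraseNone (eraseNone_superset hS)
  · refine le_iInf fun S₀ => ?_
    refine le_trans (add_le_add_right (iInf_le _ S₀.eraseNone) _) ?_
    rw [ecadd_iSup]
    refine iSup_le fun S' => ?_
    rw [ecadd_iSup]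
    refine iSup_le fun hsub => ?_
    refine le_iSup₂_of_le (Finset.insertNone S') (subset_insertNone hsub) ?_
    beta_reduce
    rw [Finset.sum_insertNone]
    show (c : EReal) + ∑ t ∈ S', f t y ≤ (c : EReal) + ∑ t ∈ S', f t y
    exact le_rfl

private lemma lambdaFin_extend (f : T → X → EReal) (c : ℝ) {S : Finset (Option T)}
    (hnone : none ∈ S) :
    (c : EReal) + LambdaFin Set.univ f S.eraseNone
      ≤ LambdaFin Set.univ (extendConst f c) S := by
  classical
  unfold LambdaFin
  rw [ecadd_iSup]
  refine iSup_le fun δ => ?_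
  rw [ecadd_iSup]
  refine iSup_le fun hδ => ?_
  refine le_iSup₂_of_le δ hδ ?_
  refine le_iInf fun x => le_iInf fun hmem => le_iInf fun hdiam => ?_
  rw [sum_option (fun o => extendConst f c o (x o)) hnone]
  show (c : EReal) + _ ≤ (c : EReal) + ∑ t ∈ S.eraseNone, f t (x (some t))
  refine add_le_add_right ?_ _
  refine iInf_le_of_le (fun t => x (some t)) ?_
  refine iInf_le_of_le (fun t _ => Set.mem_univ _) ?_
  exact iInf_le _ (fun t ht t' ht' =>
    hdiam (some t) (Finset.mem_eraseNone.mp ht) (some t') (Finset.mem_eraseNone.mp ht'))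

private lemma lambda_extend (f : T → X → EReal) (c : ℝ) :
    (c : EReal) + Lambda Set.univ f ≤ Lambda Set.univ (extendConst f c) := by
  classical
  unfold Lambda liminfF
  rw [ecadd_iSup]
  refine iSup_le fun S₀' => ?_
  refine le_iSup_of_le (Finset.insertNone S₀') ?_
  refine le_iInf fun S => le_iInf fun hS => ?_
  have hnone : none ∈ S := hS Finset.none_mem_insertNone
  refine le_trans ?_ (lambdaFin_extend f c hnone)
  exact add_le_add_right (iInf₂_le S.eraseNone (eraseNone_superset hS)) _

private lemma le_of_forall_le_add_eps {x a : EReal} (h : ∀ ε : ℝ, 0 < ε → x ≤ a + ε) :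
    x ≤ a := by
  by_contra hc
  push_neg at hc
  rcases eq_or_ne a ⊥ with rfl | hab
  · have h1 := h 1 one_pos
    rw [EReal.bot_add] at h1
    exact hc.not_ge h1
  · rcases EReal.exists_between_coe_real hc with ⟨r, har, hrx⟩
    have hat : a ≠ ⊤ := ne_top_of_lt har
    lift a to ℝ using ⟨hat, hab⟩
    have hra : a < r := EReal.coe_lt_coe_iff.mp har
    have hε : (0 : ℝ) < r - a := sub_pos.mpr hra
    have h2 := h (r - a) hε
    rw [← EReal.coe_add] at h2
    have : a + (r - a) = r := by ring
    rw [this] at h2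
    exact (lt_irrefl x) (lt_of_le_of_lt h2 hrx)

private lemma sum_real {S : Finset T} {k : T → EReal}
    (h : ∀ t ∈ S, k t ≠ ⊤ ∧ k t ≠ ⊥) : ∃ r : ℝ, ∑ t ∈ S, k t = (r : EReal) := by
  classical
  induction S using Finset.induction_on with
  | empty => exact ⟨0, by simp⟩
  | @insert a s ha ih =>
    obtain ⟨r, hr⟩ := ih fun t ht => h t (Finset.mem_insert_of_mem ht)
    have hka := h a (Finset.mem_insert_self a s)
    lift k a to ℝ using hka with ra hra
    exact ⟨ra + r, by rw [Finset.sum_insert ha, hr, ← hra, EReal.coe_add]⟩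

private lemma add_sub_add_cancel (c : ℝ) (A : EReal) {B : EReal}
    (hBt : B ≠ ⊤) (hBb : B ≠ ⊥) :
    ((c : EReal) + A) - ((c : EReal) + B) = A - B := by
  lift B to ℝ using ⟨hBt, hBb⟩
  rw [← EReal.coe_add]
  induction A using EReal.rec with
  | bot => rw [EReal.add_bot, EReal.bot_sub, EReal.bot_sub]
  | coe a =>
    rw [← EReal.coe_add, ← EReal.coe_sub, ← EReal.coe_sub, EReal.coe_eq_coe_iff]
    ring
  | top => rw [EReal.coe_add_top, EReal.top_sub_coe, EReal.top_sub_coe]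

private lemma diff_eq (f : T → X → EReal) (c : ℝ) (hbot : ∀ t x, f t x ≠ ⊥)
    {S : Finset (Option T)} (hnone : none ∈ S) (x : Option T → X)
    (hmem : ∀ o ∈ S, extendConst f c o (x o) ≠ ⊤) (y : X) :
    upperSum (extendConst f c) y - ∑ o ∈ S, extendConst f c o (x o)
      = upperSum f y - ∑ t ∈ S.eraseNone, f t (x (some t)) := by
  rw [upperSum_extend, sum_option (fun o => extendConst f c o (x o)) hnone]
  obtain ⟨r, hr⟩ := sum_real (S := S.eraseNone) (k := fun t => f t (x (some t)))
    (fun t ht => ⟨hmem (some t) (Finset.mem_eraseNone.mp ht), hbot t _⟩)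
  show ((c : EReal) + upperSum f y) - ((c : EReal) + ∑ t ∈ S.eraseNone, f t (x (some t))) = _
  exact add_sub_add_cancel c _ (by rw [hr]; exact EReal.coe_ne_top r)
    (by rw [hr]; exact EReal.coe_ne_bot r)

end AuxLemmas

section AuxTheta

variable {T : Type*} {X : Type*} [MetricSpace X]

private lemma thetaFin_extend (f : T → X → EReal) (c : ℝ) (hbot : ∀ t x, f t x ≠ ⊥)
    {S : Finset (Option T)} (hnone : none ∈ S) (hne : S.eraseNone.Nonempty) :
    ThetaFin2 Set.univ Set.univ (extendConst f c) S
      = ThetaFin2 Set.univ Set.univ f S.eraseNone := by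
  classical
  obtain ⟨t₁, ht₁⟩ := hne
  have ht₁S : some t₁ ∈ S := Finset.mem_eraseNone.mp ht₁
  unfold ThetaFin2
  apply le_antisymm
  · -- Θ g S ≤ Θ f S'
    refine le_iInf fun δ₀ => le_iInf fun hδ₀ => ?_
    refine le_of_forall_le_add_eps fun ε hε => ?_
    set δ : ℝ := min δ₀ ε with hδdef
    have hδ : 0 < δ := lt_min hδ₀ hε
    refine le_trans (iInf₂_le δ hδ) ?_
    refine iSup_le fun x => iSup_le fun hmem => iSup_le fun hdiam => ?_
    have hmem' : ∀ t ∈ S.eraseNone,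
        x (some t) ∈ (Set.univ : Set X) ∧ f t (x (some t)) ≠ ⊤ :=
      fun t ht => hmem (some t) (Finset.mem_eraseNone.mp ht)
    have hdiam' : ∀ t ∈ S.eraseNone, ∀ t' ∈ S.eraseNone,
        dist (x (some t)) (x (some t')) < δ₀ :=
      fun t ht t' ht' => lt_of_lt_of_le
        (hdiam (some t) (Finset.mem_eraseNone.mp ht) (some t') (Finset.mem_eraseNone.mp ht'))
        (min_le_left _ _)
    -- inner bound
    have hIle : (⨅ (y : X) (_ : y ∈ (Set.univ : Set X)),
          max (⨆ t ∈ S.eraseNone, (dist y (x (some t)) : EReal))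
            (upperSum f y - ∑ t ∈ S.eraseNone, f t (x (some t))))
        ≤ ⨆ (x' : T → X) (_ : ∀ t ∈ S.eraseNone, x' t ∈ (Set.univ : Set X) ∧ f t (x' t) ≠ ⊤)
            (_ : ∀ t ∈ S.eraseNone, ∀ t' ∈ S.eraseNone, dist (x' t) (x' t') < δ₀),
            ⨅ (y : X) (_ : y ∈ (Set.univ : Set X)),
              max (⨆ t ∈ S.eraseNone, (dist y (x' t) : EReal))
                (upperSum f y - ∑ t ∈ S.eraseNone, f t (x' t)) :=
      le_iSup_of_le (fun t => x (some t)) (le_iSup_of_le hmem' (le_iSup_of_le hdiam' le_rfl))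
    refine le_trans ?_ (add_le_add_left hIle (ε : EReal))
    -- goal : I_g x ≤ I_f (x ∘ some) + ε
    have hrw : (⨅ (y : X) (_ : y ∈ (Set.univ : Set X)),
          max (⨆ t ∈ S.eraseNone, (dist y (x (some t)) : EReal))
            (upperSum f y - ∑ t ∈ S.eraseNone, f t (x (some t)))) + (ε : EReal)
        = ⨅ (y : X) (_ : y ∈ (Set.univ : Set X)),
            (max (⨆ t ∈ S.eraseNone, (dist y (x (some t)) : EReal))
              (upperSum f y - ∑ t ∈ S.eraseNone, f t (x (some t))) + (ε : EReal)) := by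
      rw [add_comm, ecadd_iInf]
      refine iInf_congr fun y => ?_
      rw [ecadd_iInf]
      exact iInf_congr fun hy => add_comm _ _
    rw [hrw]
    refine le_iInf fun y => le_iInf fun hy => ?_
    refine le_trans (iInf₂_le y hy) ?_
    -- max_g y ≤ max_f y + ε
    have hεnn : (0 : EReal) ≤ (ε : EReal) := EReal.coe_nonneg.mpr hε.le
    refine max_le ?_ ?_
    · -- dist part
      refine le_trans ?_ (add_le_add_left (le_max_left _ _) _)
      refine iSup₂_le fun o ho => ?_
      cases o with
      | none =>
        have htri : dist y (x none) ≤ dist y (x (some t₁)) + dist (x (some t₁)) (x none) :=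
          dist_triangle _ _ _
        have hlt : dist (x (some t₁)) (x none) ≤ ε :=
          le_trans (hdiam (some t₁) ht₁S none hnone).le (min_le_right _ _)
        calc ((dist y (x none) : ℝ) : EReal)
            ≤ ((dist y (x (some t₁)) + dist (x (some t₁)) (x none) : ℝ) : EReal) :=
              EReal.coe_le_coe_iff.mpr htri
          _ = ((dist y (x (some t₁)) : ℝ) : EReal)
                + ((dist (x (some t₁)) (x none) : ℝ) : EReal) := EReal.coe_add _ _
          _ ≤ (⨆ t ∈ S.eraseNone, (dist y (x (some t)) : EReal)) + (ε : EReal) :=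
              add_le_add
                (le_iSup₂ (f := fun (t : T) (_ : t ∈ S.eraseNone) =>
                  ((dist y (x (some t)) : ℝ) : EReal)) t₁ ht₁)
                (EReal.coe_le_coe_iff.mpr hlt)
      | some t =>
        refine le_trans ?_ (le_add_of_nonneg_right hεnn)
        exact le_iSup₂ (f := fun (t : T) (_ : t ∈ S.eraseNone) =>
          ((dist y (x (some t)) : ℝ) : EReal)) t (Finset.mem_eraseNone.mpr ho)
    · -- difference part
      rw [diff_eq f c hbot hnone x (fun o ho => (hmem o ho).2) y]
      exact le_trans (le_max_right _ _) (le_add_of_nonneg_right hεnn)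
  · -- Θ f S' ≤ Θ g S
    refine le_iInf fun δ => le_iInf fun hδ => ?_
    refine le_trans (iInf₂_le δ hδ) ?_
    refine iSup_le fun x' => iSup_le fun hmem' => iSup_le fun hdiam' => ?_
    set x : Option T → X := fun o => o.elim (x' t₁) x' with hxdef
    have hxs : ∀ t : T, x (some t) = x' t := fun _ => rfl
    have hmemg : ∀ o ∈ S, x o ∈ (Set.univ : Set X) ∧ extendConst f c o (x o) ≠ ⊤ := by
      intro o ho
      refine ⟨Set.mem_univ _, ?_⟩
      cases o with
      | none => exact EReal.coe_ne_top c
      | some t => exact (hmem' t (Finset.mem_eraseNone.mpr ho)).2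
    have hkey : ∀ o ∈ S, ∃ t ∈ S.eraseNone, x o = x' t := by
      intro o ho
      cases o with
      | none => exact ⟨t₁, ht₁, rfl⟩
      | some t => exact ⟨t, Finset.mem_eraseNone.mpr ho, rfl⟩
    have hdiamg : ∀ o ∈ S, ∀ o' ∈ S, dist (x o) (x o') < δ := by
      intro o ho o' ho'
      obtain ⟨t, ht, hxt⟩ := hkey o ho
      obtain ⟨t', ht', hxt'⟩ := hkey o' ho'
      rw [hxt, hxt']
      exact hdiam' t ht t' ht'
    refine le_iSup_of_le x (le_iSup_of_le hmemg (le_iSup_of_le hdiamg ?_))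
    refine le_iInf fun y => le_iInf fun hy => ?_
    refine le_trans (iInf₂_le y hy) ?_
    refine max_le ?_ ?_
    · refine le_trans ?_ (le_max_left _ _)
      refine iSup₂_le fun t ht => ?_
      rw [← hxs t]
      exact le_iSup₂ (f := fun (o : Option T) (_ : o ∈ S) =>
        ((dist y (x o) : ℝ) : EReal)) (some t) (Finset.mem_eraseNone.mp ht)
    · refine le_trans ?_ (le_max_right _ _)
      rw [diff_eq f c hbot hnone x (fun o ho => (hmemg o ho).2) y]
      refine le_of_eq ?_
      congr 1

end AuxTheta

section AuxMain

variable {T : Type*} {X : Type*} [MetricSpace X]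

private lemma theta_le (f : T → X → EReal) (c : ℝ) (hbot : ∀ t x, f t x ≠ ⊥)
    [Nonempty T] :
    Theta Set.univ (extendConst f c) ≤ Theta Set.univ f := by
  classical
  unfold Theta limsupF
  beta_reduce
  refine le_iInf fun S₀' => ?_
  have t₁ : T := Classical.arbitrary T
  refine iInf_le_of_le (Finset.insertNone (insert t₁ S₀')) ?_
  refine iSup₂_le fun S hS => ?_
  have hnone : none ∈ S := hS Finset.none_mem_insertNone
  have hsub : insert t₁ S₀' ⊆ S.eraseNone := eraseNone_superset hS
  have hne : S.eraseNone.Nonempty := ⟨t₁, hsub (Finset.mem_insert_self _ _)⟩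
  rw [thetaFin_extend f c hbot hnone hne]
  exact le_iSup₂ (f := fun (S' : Finset T) (_ : S₀' ⊆ S') => ThetaFin2 Set.univ Set.univ f S')
    S.eraseNone ((Finset.subset_insert t₁ S₀').trans hsub)

private lemma theta_ge (f : T → X → EReal) (c : ℝ) (hbot : ∀ t x, f t x ≠ ⊥)
    [Nonempty T] (hT : Theta Set.univ f = 0) :
    (0 : EReal) ≤ Theta Set.univ (extendConst f c) := by
  classical
  unfold Theta limsupF
  beta_reduce
  refine le_iInf fun S₀ => ?_
  have t₁ : T := Classical.arbitrary T
  have h0 : (0 : EReal) ≤ ⨆ (S' : Finset T) (_ : insert t₁ S₀.eraseNone ⊆ S'),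
      ThetaFin2 Set.univ Set.univ f S' := by
    rw [← hT]
    exact iInf_le _ _
  refine h0.trans ?_
  refine iSup₂_le fun S' hS' => ?_
  have hne' : (Finset.insertNone S').eraseNone.Nonempty := by
    rw [Finset.eraseNone_insertNone]
    exact ⟨t₁, hS' (Finset.mem_insert_self _ _)⟩
  have heq := thetaFin_extend f c hbot (S := Finset.insertNone S')
    Finset.none_mem_insertNone hne'
  rw [Finset.eraseNone_insertNone] at heq
  rw [← heq]
  exact le_iSup₂ (f := fun (S : Finset (Option T)) (_ : S₀ ⊆ S) =>
      ThetaFin2 Set.univ Set.univ (extendConst f c) S)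
    (Finset.insertNone S')
    (subset_insertNone fun a ha => hS' (Finset.mem_insert_of_mem ha))

end AuxMain

/-- Adding a constant function preserves uniform and firm uniform lower semicontinuity. -/
theorem add_constant_preserves_uniform_lsc
    {X : Type*} [MetricSpace X] {T : Type*} [Nonempty T]
    (f : T → X → EReal) (c : ℝ)
    (hbot : ∀ t x, f t x ≠ ⊥)
    (hdom : ∃ x : X, upperSum f x ≠ ⊤)
    (hbdd : ∀ S : Finset T, (⨅ x : X, ∑ t ∈ S, f t x) ≠ ⊥)
 :
    (((⨅ x : X, upperSum f x) ≤ Lambda (Set.univ : Set X) f →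
        (⨅ x : X, upperSum (extendConst f c) x) ≤
          Lambda (Set.univ : Set X) (extendConst f c)) ∧
      (Theta (Set.univ : Set X) f = 0 →
        Theta (Set.univ : Set X) (extendConst f c) = 0)) := by
  constructor
  · intro h1
    have hinf : (⨅ x : X, upperSum (extendConst f c) x)
        = (c : EReal) + ⨅ x : X, upperSum f x := by
      simp_rw [upperSum_extend f c]
      rw [ecadd_iInf]
    rw [hinf]
    exact le_trans (add_le_add_right h1 _) (lambda_extend f c)
  · intro hT
    exact le_antisymm ((theta_le f c hbot).trans hT.le) (theta_ge f c hbot hT)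

end
end

section
/- Stability of firm uniform lower semicontinuity under a uniformly continuous perturbation: suppose {f_t}_{t∈T} is firmly uniformly lower semicontinuous on X and g : X → ℝ is uniformly continuous. Fix t₀ ∈ T and set f̃_{t₀} := f_{t₀} + g and f̃_t := f_t for all t ∈ T with t ≠ t₀. Then {f̃_t}_{t∈T} is firmly uniformly lower semicontinuous on X. -/
open scoped BigOperators
open Filter

noncomputable section

def ERealAddIso (c : ℝ) : EReal ≃o EReal :=
  StrictMono.orderIsoOfSurjective (fun x => x + (c : EReal))
    (fun _ _ h => EReal.add_lt_add_right_coe h c)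
    (fun y => ⟨y - c, EReal.sub_add_cancel⟩)

lemma EReal_add_coe_eq_top_iff (x : EReal) (r : ℝ) : x + (r : EReal) = ⊤ ↔ x = ⊤ := by
  induction x using EReal.rec with
  | bot => simp [EReal.bot_add]
  | coe a => simp [← EReal.coe_add]
  | top => simp [EReal.top_add_coe]

lemma EReal_sum_coe {T : Type*} (S : Finset T) (a : T → EReal)
    (h : ∀ t ∈ S, a t ≠ ⊤ ∧ a t ≠ ⊥) : ∃ r : ℝ, ∑ t ∈ S, a t = (r : EReal) := by
  classical
  induction S using Finset.induction_on with
  | empty => exact ⟨0, by simp⟩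
  | @insert s S' hx ih =>
    obtain ⟨r, hr⟩ := ih (fun t ht => h t (Finset.mem_insert_of_mem ht))
    obtain ⟨h1, h2⟩ := h s (Finset.mem_insert_self _ _)
    refine ⟨(a s).toReal + r, ?_⟩
    rw [Finset.sum_insert hx, hr, EReal.coe_add, EReal.coe_toReal h1 h2]

lemma EReal_key_sub (U : EReal) (a r b : ℝ) :
    (U + (a : EReal)) - ((r + b : ℝ) : EReal) = (U - (r : EReal)) + ((a - b : ℝ) : EReal) := by
  induction U using EReal.rec with
  | bot => rw [EReal.bot_add, EReal.bot_sub, EReal.bot_sub, EReal.bot_add]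
  | coe u =>
    rw [← EReal.coe_add, ← EReal.coe_sub, ← EReal.coe_sub, ← EReal.coe_add]
    norm_cast
    ring
  | top => rw [EReal.top_add_coe, EReal.top_sub_coe, EReal.top_sub_coe, EReal.top_add_coe]

lemma EReal_le_zero_of_forall (x : EReal) (h : ∀ ε : ℝ, 0 < ε → x ≤ (ε : EReal)) : x ≤ 0 := by
  by_contra hc
  push_neg at hc
  induction x using EReal.rec with
  | bot => simp at hc
  | coe u =>
    have hu : 0 < u := by exact_mod_cast hc
    have := h (u / 2) (by linarith)
    rw [EReal.coe_le_coe_iff] at this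
    linarith
  | top =>
    have := h 1 one_pos
    rw [top_le_iff] at this
    exact EReal.coe_ne_top 1 this

lemma limsupF_add_coe {T : Type*} (α : Finset T → EReal) (c : ℝ) :
    limsupF (fun S => α S + (c : EReal)) = limsupF α + c := by
  unfold limsupF
  rw [show (⨅ S₀ : Finset T, ⨆ S, ⨆ _ : S₀ ⊆ S, α S) + (c : EReal)
      = ERealAddIso c (⨅ S₀ : Finset T, ⨆ S, ⨆ _ : S₀ ⊆ S, α S) from rfl,
    OrderIso.map_iInf]
  refine iInf_congr fun S₀ => ?_
  rw [OrderIso.map_iSup]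
  refine iSup_congr fun S => ?_
  rw [OrderIso.map_iSup]
  rfl

lemma limsupF_congr_of_superset {T : Type*} [DecidableEq T] (α β : Finset T → EReal) (S₁ : Finset T)
    (h : ∀ S, S₁ ⊆ S → α S = β S) : limsupF α = limsupF β := by
  have key : ∀ (α β : Finset T → EReal), (∀ S, S₁ ⊆ S → α S = β S) → limsupF α ≤ limsupF β := by
    intro α β h
    refine le_iInf fun S₀ => ?_
    calc limsupF α ≤ ⨆ S, ⨆ _ : (S₀ ∪ S₁) ⊆ S, α S := iInf_le _ _
      _ = ⨆ S, ⨆ _ : (S₀ ∪ S₁) ⊆ S, β S := by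
          refine iSup_congr fun S => iSup_congr fun hS => ?_
          exact h S (Finset.subset_union_right.trans hS)
      _ ≤ ⨆ S, ⨆ _ : S₀ ⊆ S, β S := by
          refine iSup_mono fun S => iSup_le fun hS => ?_
          exact le_iSup (fun _ : S₀ ⊆ S => β S) (Finset.subset_union_left.trans hS)
  exact le_antisymm (key α β h) (key β α (fun S hS => (h S hS).symm))

lemma sum_tilde {T X : Type*} [DecidableEq T] (f : T → X → EReal) (g : X → ℝ) (t₀ : T)
    (S : Finset T) (hS : t₀ ∈ S) (x : T → X) :
    ∑ t ∈ S, (if t = t₀ then f t (x t) + ((g (x t) : ℝ) : EReal) else f t (x t))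
      = (∑ t ∈ S, f t (x t)) + ((g (x t₀) : ℝ) : EReal) := by
  rw [← Finset.sum_erase_add _ _ hS, ← Finset.sum_erase_add _ (fun t => f t (x t)) hS]
  rw [Finset.sum_congr rfl (fun t ht => if_neg (Finset.ne_of_mem_erase ht))]
  rw [if_pos rfl, ← add_assoc]

/-- Stability of firm uniform lower semicontinuity under a uniformly continuous
perturbation of one of the functions. -/
theorem firm_uniform_lsc_stable_under_unifcont_perturbation
    {X : Type*} [MetricSpace X] {T : Type*} [Nonempty T] [DecidableEq T]
    (f : T → X → EReal)
    (hbot : ∀ t x, f t x ≠ ⊥)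
    (hdom : ∃ x : X, upperSum f x ≠ ⊤)
    (hbdd : ∀ S : Finset T, (⨅ x : X, ∑ t ∈ S, f t x) ≠ ⊥)
    (hTheta : Theta (Set.univ : Set X) f = 0)
    (g : X → ℝ) (hg : UniformContinuous g) (t₀ : T) :
    Theta (Set.univ : Set X)
      (fun t x => if t = t₀ then f t x + ((g x : ℝ) : EReal) else f t x) = 0 := by
  classical
  set F : T → X → EReal := fun t x => if t = t₀ then f t x + ((g x : ℝ) : EReal) else f t x
    with hF
  have hdomF : ∀ (t : T) (z : X), F t z ≠ ⊤ ↔ f t z ≠ ⊤ := by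
    intro t z
    simp only [hF]
    split_ifs with h
    · exact not_congr (EReal_add_coe_eq_top_iff (f t z) (g z))
    · exact Iff.rfl
  have hsum : ∀ (S : Finset T), t₀ ∈ S → ∀ x : T → X,
      ∑ t ∈ S, F t (x t) = (∑ t ∈ S, f t (x t)) + ((g (x t₀) : ℝ) : EReal) := by
    intro S hS x
    simp only [hF]
    exact sum_tilde f g t₀ S hS x
  have hus : ∀ y : X, upperSum F y = upperSum f y + ((g y : ℝ) : EReal) := by
    intro y
    have h1 : upperSum F y = limsupF (fun S => (∑ t ∈ S, f t y) + ((g y : ℝ) : EReal)) := by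
      simp only [upperSum, hF]
      exact limsupF_congr_of_superset _ _ {t₀}
        (fun S hS => sum_tilde f g t₀ S (hS (Finset.mem_singleton_self t₀)) (fun _ => y))
    rw [h1, limsupF_add_coe]
    rfl
  have upper : Theta (Set.univ : Set X) F ≤ 0 := by
    apply EReal_le_zero_of_forall
    intro ε hε
    obtain ⟨δg, hδg, hgc⟩ := Metric.uniformContinuous_iff.mp hg (ε / 2) (by linarith)
    set ε'' := min (ε / 2) δg with hε''def
    have hε''pos : 0 < ε'' := lt_min (by linarith) hδg
    have h1 : Theta (Set.univ : Set X) f < (ε'' : EReal) := by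
      rw [hTheta]
      exact EReal.coe_pos.mpr hε''pos
    simp only [Theta, limsupF] at h1
    obtain ⟨S₀, hS₀⟩ := iInf_lt_iff.mp h1
    have key : ∀ S : Finset T, insert t₀ S₀ ⊆ S →
        ThetaFin2 Set.univ Set.univ F S ≤ ((ε'' + ε / 2 : ℝ) : EReal) := by
      intro S hS
      have ht₀S : t₀ ∈ S := hS (Finset.mem_insert_self _ _)
      have hfS : ThetaFin2 Set.univ Set.univ f S < (ε'' : EReal) := by
        refine lt_of_le_of_lt ?_ hS₀
        refine le_iSup_of_le S ?_
        exact le_iSup_of_le ((Finset.subset_insert t₀ S₀).trans hS) le_rfl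
      simp only [ThetaFin2] at hfS
      obtain ⟨δ₀, hrest⟩ := iInf_lt_iff.mp hfS
      obtain ⟨hδ₀, hsupf⟩ := iInf_lt_iff.mp hrest
      simp only [ThetaFin2]
      refine iInf₂_le_of_le δ₀ hδ₀ ?_
      refine iSup_le fun x => iSup_le fun hx1 => iSup_le fun hx2 => ?_
      have hx1f : ∀ t ∈ S, x t ∈ Set.univ ∧ f t (x t) ≠ ⊤ :=
        fun t ht => ⟨trivial, (hdomF t (x t)).mp (hx1 t ht).2⟩
      have hinf : (⨅ y : X, ⨅ _ : y ∈ Set.univ,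
          max (⨆ t ∈ S, (dist y (x t) : EReal))
            (upperSum f y - ∑ t ∈ S, f t (x t))) < (ε'' : EReal) := by
        refine lt_of_le_of_lt ?_ hsupf
        refine le_iSup_of_le x ?_
        refine le_iSup_of_le hx1f ?_
        exact le_iSup_of_le hx2 le_rfl
      obtain ⟨y, hy⟩ := iInf_lt_iff.mp hinf
      obtain ⟨-, hy⟩ := iInf_lt_iff.mp hy
      rw [max_lt_iff] at hy
      obtain ⟨hD, hU⟩ := hy
      have hdist : dist y (x t₀) < ε'' := by
        have h2 : (dist y (x t₀) : EReal) < (ε'' : EReal) := by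
          refine lt_of_le_of_lt ?_ hD
          exact le_iSup₂_of_le t₀ ht₀S le_rfl
        exact_mod_cast h2
      have hgy : |g y - g (x t₀)| < ε / 2 := by
        have := hgc (lt_of_lt_of_le hdist (min_le_right _ _))
        rwa [Real.dist_eq] at this
      obtain ⟨r, hr⟩ := EReal_sum_coe S (fun t => f t (x t))
        (fun t ht => ⟨(hx1f t ht).2, hbot t (x t)⟩)
      refine iInf₂_le_of_le y (Set.mem_univ y) ?_
      rw [hus y, hsum S ht₀S x, hr, ← EReal.coe_add,
        EReal_key_sub (upperSum f y) (g y) r (g (x t₀))]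
      refine max_le ?_ ?_
      · refine le_trans hD.le (EReal.coe_le_coe_iff.mpr ?_)
        linarith
      · rw [show ((ε'' + ε / 2 : ℝ) : EReal) = (ε'' : EReal) + ((ε / 2 : ℝ) : EReal) from
          EReal.coe_add _ _]
        refine add_le_add ?_ ?_
        · rw [hr] at hU
          exact hU.le
        · exact EReal.coe_le_coe_iff.mpr (le_of_lt (lt_of_le_of_lt (le_abs_self _) hgy))
    have hfinal : Theta (Set.univ : Set X) F ≤ ((ε'' + ε / 2 : ℝ) : EReal) := by
      simp only [Theta, limsupF]
      refine le_trans (iInf_le _ (insert t₀ S₀)) ?_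
      exact iSup_le fun S => iSup_le fun hS => key S hS
    refine le_trans hfinal (EReal.coe_le_coe_iff.mpr ?_)
    have : ε'' ≤ ε / 2 := min_le_left _ _
    linarith
  have lower : (0 : EReal) ≤ Theta (Set.univ : Set X) F := by
    simp only [Theta, limsupF]
    refine le_iInf fun S₀ => ?_
    have h0 : (⊥ : EReal) < ⨆ S, ⨆ _ : insert t₀ S₀ ⊆ S, ThetaFin2 Set.univ Set.univ f S := by
      refine lt_of_lt_of_le EReal.bot_lt_zero ?_
      rw [← hTheta]
      simp only [Theta, limsupF]
      exact iInf_le _ _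
    obtain ⟨S, hS⟩ := lt_iSup_iff.mp h0
    obtain ⟨hSsub, hSbot⟩ := lt_iSup_iff.mp hS
    have ht₀S : t₀ ∈ S := hSsub (Finset.mem_insert_self _ _)
    refine le_iSup_of_le S ?_
    refine le_iSup_of_le ((Finset.subset_insert t₀ S₀).trans hSsub) ?_
    simp only [ThetaFin2]
    refine le_iInf fun δ => le_iInf fun hδ => ?_
    have hbd : (⊥ : EReal) < ⨆ (x : T → X) (_ : ∀ t ∈ S, x t ∈ Set.univ ∧ f t (x t) ≠ ⊤)
        (_ : ∀ t ∈ S, ∀ t' ∈ S, dist (x t) (x t') < δ),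
        ⨅ (y : X) (_ : y ∈ Set.univ),
          max (⨆ t ∈ S, (dist y (x t) : EReal)) (upperSum f y - ∑ t ∈ S, f t (x t)) := by
      refine lt_of_lt_of_le hSbot ?_
      simp only [ThetaFin2]
      exact iInf₂_le δ hδ
    obtain ⟨x, hx⟩ := lt_iSup_iff.mp hbd
    obtain ⟨hx1, hx2bot⟩ := lt_iSup_iff.mp hx
    obtain ⟨hx2, -⟩ := lt_iSup_iff.mp hx2bot
    refine le_iSup_of_le x ?_
    refine le_iSup_of_le (fun t ht => ⟨trivial, (hdomF t (x t)).mpr (hx1 t ht).2⟩) ?_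
    refine le_iSup_of_le hx2 ?_
    refine le_iInf fun y => le_iInf fun _ => ?_
    refine le_trans ?_ (le_max_left _ _)
    exact le_iSup₂_of_le t₀ ht₀S (EReal.coe_nonneg.mpr dist_nonneg)
  exact le_antisymm upper lower


end
end

section
/- Adding a uniformly continuous function preserves firm uniform lower semicontinuity: suppose {f_t}_{t∈T} is firmly uniformly lower semicontinuous on X, t₀ ∉ T, and f_{t₀} : X → ℝ is uniformly continuous. Then the family {f_t}_{t∈T∪{t₀}} is firmly uniformly lower semicontinuous on X. -/
open scoped BigOperators
open Filter

noncomputable section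

private lemma ereal_neg_add_cancel (c : ℝ) (x : EReal) :
    (((-c : ℝ)) : EReal) + ((c : EReal) + x) = x := by
  induction x using EReal.rec with
  | bot => rw [EReal.add_bot, EReal.add_bot]
  | coe a => norm_cast; ring
  | top => rw [EReal.coe_add_top, EReal.coe_add_top]

private lemma ereal_add_iSup {ι : Sort*} (c : ℝ) (h : ι → EReal) :
    (c : EReal) + ⨆ i, h i = ⨆ i, ((c : EReal) + h i) := by
  refine le_antisymm ?_ (iSup_le fun i => add_le_add_right (le_iSup h i) _)
  have h2 : ⨆ i, h i ≤ ((-c : ℝ) : EReal) + ⨆ i, ((c : EReal) + h i) :=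
    iSup_le fun i => by
      rw [← ereal_neg_add_cancel c (h i)]
      exact add_le_add_right (le_iSup (fun i => (c : EReal) + h i) i) _
  calc (c : EReal) + ⨆ i, h i
      ≤ (c : EReal) + (((-c : ℝ) : EReal) + ⨆ i, ((c : EReal) + h i)) := add_le_add_right h2 _
    _ = ⨆ i, ((c : EReal) + h i) := by
        have := ereal_neg_add_cancel (-c) (⨆ i, ((c : EReal) + h i))
        rwa [neg_neg] at this

private lemma ereal_add_iInf {ι : Sort*} (c : ℝ) (h : ι → EReal) :
    (c : EReal) + ⨅ i, h i = ⨅ i, ((c : EReal) + h i) := by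
  refine le_antisymm (le_iInf fun i => add_le_add_right (iInf_le h i) _) ?_
  have h2 : ((-c : ℝ) : EReal) + ⨅ i, ((c : EReal) + h i) ≤ ⨅ i, h i :=
    le_iInf fun i => by
      rw [← ereal_neg_add_cancel c (h i)]
      exact add_le_add_right (iInf_le (fun i => (c : EReal) + h i) i) _
  calc ⨅ i, ((c : EReal) + h i)
      = (c : EReal) + (((-c : ℝ) : EReal) + ⨅ i, ((c : EReal) + h i)) := by
        have := ereal_neg_add_cancel (-c) (⨅ i, ((c : EReal) + h i))
        rw [neg_neg] at this; rw [this]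
    _ ≤ (c : EReal) + ⨅ i, h i := add_le_add_right h2 _

private lemma ereal_sum_coe {ι : Type*} (s : Finset ι) (h : ι → EReal)
    (H : ∀ i ∈ s, h i ≠ ⊤) (H' : ∀ i ∈ s, h i ≠ ⊥) :
    ∃ b : ℝ, ∑ i ∈ s, h i = (b : EReal) := by
  classical
  revert H H'
  induction s using Finset.induction_on with
  | empty => exact fun _ _ => ⟨0, by simp⟩
  | @insert a s ha ih =>
    intro H H'
    obtain ⟨b, hb⟩ := ih (fun i hi => H i (Finset.mem_insert_of_mem hi))
      (fun i hi => H' i (Finset.mem_insert_of_mem hi))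
    refine ⟨(h a).toReal + b, ?_⟩
    rw [Finset.sum_insert ha, hb, EReal.coe_add,
      EReal.coe_toReal (H _ (Finset.mem_insert_self _ _)) (H' _ (Finset.mem_insert_self _ _))]

/-- The extended family. -/
private def Fam {T X : Type*} (f : T → X → EReal) (g : X → ℝ) : Option T → X → EReal :=
  fun o x => o.elim ((g x : ℝ) : EReal) (fun t => f t x)

@[simp] private lemma Fam_none {T X : Type*} (f : T → X → EReal) (g : X → ℝ) (x : X) :
    Fam f g none x = ((g x : ℝ) : EReal) := rfl

@[simp] private lemma Fam_some {T X : Type*} (f : T → X → EReal) (g : X → ℝ) (t : T) (x : X) :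
    Fam f g (some t) x = f t x := rfl

private lemma fam_sum {T X : Type*} (f : T → X → EReal) (g : X → ℝ)
    (S' : Finset (Option T)) (hnone : none ∈ S') (x' : Option T → X) :
    ∑ o ∈ S', Fam f g o (x' o)
      = ((g (x' none) : ℝ) : EReal) + ∑ t ∈ S'.eraseNone, f t (x' (some t)) := by
  classical
  have h2 : S' = Finset.insertNone S'.eraseNone := by
    rw [Finset.insertNone_eraseNone, Finset.insert_eq_self.2 hnone]
  conv_lhs => rw [h2]
  rw [Finset.sum_insertNone]
  rfl

private lemma upperSum_fam {T X : Type*} (f : T → X → EReal) (g : X → ℝ) (y : X) :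
    upperSum (Fam f g) y = ((g y : ℝ) : EReal) + upperSum f y := by
  classical
  simp only [upperSum, limsupF]
  refine le_antisymm ?_ ?_
  · rw [ereal_add_iInf]
    refine le_iInf fun S₀ => ?_
    refine iInf_le_of_le (Finset.insertNone S₀) ?_
    refine iSup_le fun S' => iSup_le fun hS' => ?_
    have hnone : none ∈ S' := hS' Finset.none_mem_insertNone
    rw [fam_sum f g S' hnone (fun _ => y)]
    have hsub : S₀ ⊆ S'.eraseNone := fun t ht =>
      Finset.mem_eraseNone.2 (hS' (Finset.some_mem_insertNone.2 ht))
    exact add_le_add_right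
      (le_iSup₂ (f := fun (S : Finset T) (_ : S₀ ⊆ S) => ∑ t ∈ S, f t y) S'.eraseNone hsub) _
  · refine le_iInf fun S₀' => ?_
    refine le_trans (add_le_add_right (iInf_le _ S₀'.eraseNone) ((g y : ℝ) : EReal)) ?_
    rw [ereal_add_iSup]
    refine iSup_le fun S => ?_
    rw [ereal_add_iSup]
    refine iSup_le fun hS => ?_
    refine le_iSup₂_of_le (S₀' ∪ Finset.insertNone S) Finset.subset_union_left ?_
    have hnone : none ∈ S₀' ∪ Finset.insertNone S :=
      Finset.mem_union_right _ Finset.none_mem_insertNone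
    rw [fam_sum f g _ hnone (fun _ => y)]
    have herase : (S₀' ∪ Finset.insertNone S).eraseNone = S := by
      rw [Finset.eraseNone_union, Finset.eraseNone_insertNone]
      exact Finset.union_eq_right.2 hS
    rw [herase]

/-- Adding a uniformly continuous real-valued function preserves firm uniform lower
semicontinuity; the extended family `{f_t}_{t∈T∪{t₀}}` is indexed by `Option T`,
with `none` playing the role of `t₀ ∉ T`. -/
theorem add_unifcont_preserves_firm_uniform_lsc
    {X : Type*} [MetricSpace X] {T : Type*} [Nonempty T]
    (f : T → X → EReal)
    (hbot : ∀ t x, f t x ≠ ⊥)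
    (hdom : ∃ x : X, upperSum f x ≠ ⊤)
    (hbdd : ∀ S : Finset T, (⨅ x : X, ∑ t ∈ S, f t x) ≠ ⊥)
    (hTheta : Theta (Set.univ : Set X) f = 0)
    (g : X → ℝ) (hg : UniformContinuous g) :
    Theta (Set.univ : Set X)
      (fun (o : Option T) x => o.elim ((g x : ℝ) : EReal) (fun t => f t x)) = 0 := by
  classical
  show Theta (Set.univ : Set X) (Fam f g) = 0
  obtain ⟨t₁⟩ := ‹Nonempty T›
  refine le_antisymm ?hub ?hlb
  case hub =>
    have key : ∀ ε : ℝ, 0 < ε → Theta (Set.univ : Set X) (Fam f g) ≤ (ε : EReal) := by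
      intro ε hε
      obtain ⟨η, hη, hgη⟩ := Metric.uniformContinuous_iff.1 hg (ε/3) (by linarith)
      set μ : ℝ := min (ε/3) (η/2) with hμdef
      have hμ : 0 < μ := lt_min (by linarith) (by linarith)
      have hμ3 : μ ≤ ε/3 := min_le_left _ _
      have h0 : Theta (Set.univ : Set X) f < (μ : EReal) := by
        rw [hTheta]; exact_mod_cast hμ
      rw [Theta, limsupF, iInf_lt_iff] at h0
      obtain ⟨S₀r, hS₀r⟩ := h0
      have hS : ∀ S : Finset T, insert t₁ S₀r ⊆ S →
          ThetaFin2 Set.univ Set.univ f S < (μ : EReal) := by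
        intro S hsub
        exact lt_of_le_of_lt
          (le_iSup₂ (f := fun (S : Finset T) (_ : S₀r ⊆ S) => ThetaFin2 Set.univ Set.univ f S)
            S ((Finset.subset_insert t₁ S₀r).trans hsub)) hS₀r
      rw [Theta, limsupF]
      refine iInf_le_of_le (Finset.insertNone (insert t₁ S₀r))
        (iSup_le fun S' => iSup_le fun hS' => ?_)
      have hnone : none ∈ S' := hS' Finset.none_mem_insertNone
      have hsubS : insert t₁ S₀r ⊆ S'.eraseNone := fun t ht =>
        Finset.mem_eraseNone.2 (hS' (Finset.some_mem_insertNone.2 ht))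
      have ht₁S : t₁ ∈ S'.eraseNone := hsubS (Finset.mem_insert_self _ _)
      have hγ := hS S'.eraseNone hsubS
      rw [ThetaFin2, iInf_lt_iff] at hγ
      obtain ⟨δ₁, hγ⟩ := hγ
      rw [iInf_lt_iff] at hγ
      obtain ⟨hδ₁, hΨ⟩ := hγ
      set δ : ℝ := min δ₁ (min (η/2) (ε/3)) with hδdef
      have hδ : 0 < δ := lt_min hδ₁ (lt_min (by linarith) (by linarith))
      have hδη : δ ≤ η/2 := le_trans (min_le_right _ _) (min_le_left _ _)
      have hδ3 : δ ≤ ε/3 := le_trans (min_le_right _ _) (min_le_right _ _)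
      rw [ThetaFin2]
      refine iInf_le_of_le δ (iInf_le_of_le hδ ?_)
      refine iSup_le fun x' => iSup_le fun hx'dom => iSup_le fun hx'diam => ?_
      have hxdom : ∀ t ∈ S'.eraseNone, x' (some t) ∈ Set.univ ∧ f t (x' (some t)) ≠ ⊤ :=
        fun t ht => hx'dom (some t) (Finset.mem_eraseNone.1 ht)
      have hxdiam : ∀ t ∈ S'.eraseNone, ∀ t' ∈ S'.eraseNone,
          dist (x' (some t)) (x' (some t')) < δ₁ := fun t ht t' ht' =>
        lt_of_lt_of_le
          (hx'diam (some t) (Finset.mem_eraseNone.1 ht) (some t') (Finset.mem_eraseNone.1 ht'))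
          (min_le_left _ _)
      have hcand : (⨅ (y : X), ⨅ (_ : y ∈ Set.univ),
          max (⨆ t ∈ S'.eraseNone, (dist y (x' (some t)) : EReal))
            (upperSum f y - ∑ t ∈ S'.eraseNone, f t (x' (some t)))) < (μ : EReal) := by
        refine lt_of_le_of_lt ?_ hΨ
        refine le_iSup_of_le (fun t => x' (some t)) ?_
        refine le_iSup_of_le hxdom ?_
        exact le_iSup_of_le hxdiam le_rfl
      rw [iInf_lt_iff] at hcand
      obtain ⟨y, hcand⟩ := hcand
      rw [iInf_lt_iff] at hcand
      obtain ⟨-, hcand⟩ := hcand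
      rw [max_lt_iff] at hcand
      obtain ⟨hdist, hval⟩ := hcand
      have hdisty : ∀ t ∈ S'.eraseNone, dist y (x' (some t)) < μ := by
        intro t ht
        have := lt_of_le_of_lt
          (le_iSup₂ (f := fun t (_ : t ∈ S'.eraseNone) => (dist y (x' (some t)) : EReal)) t ht)
          hdist
        exact_mod_cast this
      have hdn : dist y (x' none) < μ + δ := by
        have h1 : dist (x' (some t₁)) (x' none) < δ :=
          hx'diam (some t₁) (Finset.mem_eraseNone.1 ht₁S) none hnone
        calc dist y (x' none) ≤ dist y (x' (some t₁)) + dist (x' (some t₁)) (x' none) :=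
              dist_triangle _ _ _
          _ < μ + δ := add_lt_add (hdisty t₁ ht₁S) h1
      have hgdist : dist (g y) (g (x' none)) < ε/3 := by
        refine hgη ?_
        have h1 : μ ≤ η/2 := min_le_right _ _
        linarith
      refine iInf_le_of_le y (iInf_le_of_le (Set.mem_univ y) ?_)
      refine max_le ?_ ?_
      · refine iSup_le fun o => iSup_le fun ho => ?_
        cases o with
        | none =>
          have : dist y (x' none) ≤ ε := by linarith
          exact_mod_cast this
        | some t =>
          have ht : t ∈ S'.eraseNone := Finset.mem_eraseNone.2 ho
          have : dist y (x' (some t)) ≤ ε := by linarith [hdisty t ht]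
          exact_mod_cast this
      · rw [upperSum_fam f g y, fam_sum f g S' hnone x']
        obtain ⟨b, hb⟩ := ereal_sum_coe S'.eraseNone (fun t => f t (x' (some t)))
          (fun t ht => (hxdom t ht).2) (fun t ht => hbot t (x' (some t)))
        rw [hb]
        have hval' : upperSum f y - (b : EReal) < (μ : EReal) := by rwa [hb] at hval
        revert hval'
        generalize upperSum f y = A
        intro hval'
        induction A using EReal.rec with
        | bot =>
          rw [EReal.add_bot, EReal.bot_sub]
          exact bot_le
        | top =>
          exfalso
          rw [EReal.top_sub_coe] at hval'
          exact not_top_lt hval'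
        | coe a =>
          rw [← EReal.coe_sub] at hval'
          have h1 : a - b < μ := by exact_mod_cast hval'
          have h2 : g y - g (x' none) < ε/3 := by
            rw [Real.dist_eq] at hgdist
            exact (abs_lt.1 hgdist).2
          rw [← EReal.coe_add, ← EReal.coe_add, ← EReal.coe_sub]
          have : g y + a - (g (x' none) + b) ≤ ε := by linarith
          exact_mod_cast this
    by_contra hcon
    rw [not_le] at hcon
    obtain ⟨r, hr0, hrT⟩ := EReal.lt_iff_exists_real_btwn.1 hcon
    exact absurd (key r (by exact_mod_cast hr0)) (not_le.2 hrT)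
  case hlb =>
    rw [Theta, limsupF]
    refine le_iInf fun S₀' => ?_
    have h0 : (0 : EReal) ≤ ⨆ (S : Finset T) (_ : insert t₁ S₀'.eraseNone ⊆ S),
        ThetaFin2 Set.univ Set.univ f S := by
      conv_lhs => rw [← hTheta]
      exact iInf_le
        (fun S₀ => ⨆ (S : Finset T) (_ : S₀ ⊆ S), ThetaFin2 Set.univ Set.univ f S) _
    have hex : ∃ S : Finset T, insert t₁ S₀'.eraseNone ⊆ S ∧
        ThetaFin2 Set.univ Set.univ f S ≠ ⊥ := by
      by_contra hno
      push_neg at hno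
      have hb2 : (⨆ (S : Finset T) (_ : insert t₁ S₀'.eraseNone ⊆ S),
          ThetaFin2 Set.univ Set.univ f S) ≤ ⊥ :=
        iSup_le fun S => iSup_le fun hS => le_of_eq (hno S hS)
      have : (0 : EReal) = ⊥ := le_bot_iff.1 (h0.trans hb2)
      simp at this
    obtain ⟨S, hSsub, hSne⟩ := hex
    have ht₁S : t₁ ∈ S := hSsub (Finset.mem_insert_self _ _)
    refine le_iSup₂_of_le (S₀' ∪ Finset.insertNone S) Finset.subset_union_left ?_
    have hnone : none ∈ S₀' ∪ Finset.insertNone S :=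
      Finset.mem_union_right _ Finset.none_mem_insertNone
    have herase : (S₀' ∪ Finset.insertNone S).eraseNone = S := by
      rw [Finset.eraseNone_union, Finset.eraseNone_insertNone]
      exact Finset.union_eq_right.2 fun t ht => hSsub (Finset.mem_insert_of_mem ht)
    rw [ThetaFin2]
    refine le_iInf fun δ => le_iInf fun hδ => ?_
    have hexx : ∃ xx : T → X, (∀ t ∈ S, xx t ∈ Set.univ ∧ f t (xx t) ≠ ⊤) ∧
        (∀ t ∈ S, ∀ t' ∈ S, dist (xx t) (xx t') < δ) := by
      by_contra hno
      push_neg at hno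
      refine hSne (le_bot_iff.1 ?_)
      rw [ThetaFin2]
      refine iInf_le_of_le δ (iInf_le_of_le hδ ?_)
      refine iSup_le fun xx => iSup_le fun h1 => iSup_le fun h2 => ?_
      obtain ⟨t, ht, t', ht', hge⟩ := hno xx h1
      exact ((not_lt.2 hge) (h2 t ht t' ht')).elim
    obtain ⟨xx, hxx1, hxx2⟩ := hexx
    refine le_iSup_of_le (fun o => o.elim (xx t₁) xx) ?_
    refine le_iSup_of_le ?_ (le_iSup_of_le ?_ ?_)
    · -- domain condition
      intro o ho
      cases o with
      | none => exact ⟨Set.mem_univ _, EReal.coe_ne_top _⟩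
      | some t =>
        have ht : t ∈ S := by rw [← herase]; exact Finset.mem_eraseNone.2 ho
        exact hxx1 t ht
    · -- diameter condition
      intro o ho o' ho'
      have hmem : ∀ p ∈ S₀' ∪ Finset.insertNone S, (p.elim t₁ id) ∈ S := by
        intro p hp
        cases p with
        | none => exact ht₁S
        | some t => rw [← herase]; exact Finset.mem_eraseNone.2 hp
      have h1 := hmem o ho
      have h2 := hmem o' ho'
      cases o with
      | none =>
        cases o' with
        | none => simpa using hδ
        | some t' => exact hxx2 t₁ ht₁S t' (hmem _ ho')
      | some t =>
        cases o' with
        | none => exact hxx2 t (hmem _ ho) t₁ ht₁S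
        | some t' => exact hxx2 t (hmem _ ho) t' (hmem _ ho')
    · -- inner inf nonneg
      refine le_iInf fun y => le_iInf fun _ => ?_
      refine le_trans ?_ (le_max_left _ _)
      refine le_trans ?_
        (le_iSup₂ (f := fun (o : Option T) (_ : o ∈ S₀' ∪ Finset.insertNone S) =>
          ((dist y ((fun o => o.elim (xx t₁) xx) o) : ℝ) : EReal)) none hnone)
      exact_mod_cast dist_nonneg

end
end

section
/- Inf-compactness sufficient conditions: suppose every f_t (t ∈ T) is lower semicontinuous on X, and there exist t₀ ∈ T and a finite S₀ ⊆ T such that the sublevel set {x ∈ X : f_{t₀}(x) ≤ c} is compact for every c ∈ ℝ, and Λ({f_t}_{t∈S∖{t₀}}) > −∞ for every finite S ⊆ T with S₀ ∪ {t₀} ⊆ S. Then Δ({f_t}_{t∈T}) ≤ 0. If, additionally, for each finite S ⊆ T with S₀ ∪ {t₀} ⊆ S one has inf over δ > 0 of the supremum of Σ_{t∈S} f_t(x_t), over all choices x_t ∈ dom f_t (t ∈ S) with diam{x_t}_{t∈S} < δ, is < +∞, then limsup_{S↑T} Θ({f_t}_{t∈S}) = 0. -/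
open scoped BigOperators
open Filter

noncomputable section

/-- The quantity `Θ({f_t}_{t∈S})` for a finite family: the inner sum is
`Σ_{t∈S}(f_t(x) − f_t(x_t))` and the infimum is over all of `X`. -/
def ThetaFinSelf {T X : Type*} [MetricSpace X] (f : T → X → EReal)
    (S : Finset T) : EReal :=
  ⨅ (δ : ℝ) (_ : 0 < δ),
    ⨆ (x : T → X) (_ : ∀ t ∈ S, f t (x t) ≠ ⊤)
      (_ : ∀ t ∈ S, ∀ t' ∈ S, dist (x t) (x t') < δ),
      ⨅ y : X,
        max (⨆ t ∈ S, (dist y (x t) : EReal))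
          (∑ t ∈ S, (f t y - f t (x t)))

section AuxLemmas
open Filter

lemma ereal_coe_sum {T : Type*} (S : Finset T) (g : T → ℝ) :
    ((∑ t ∈ S, g t : ℝ) : EReal) = ∑ t ∈ S, (g t : EReal) :=
  map_sum (⟨⟨Real.toEReal, EReal.coe_zero⟩, EReal.coe_add⟩ : ℝ →+ EReal) g S

lemma ereal_sum_ne_bot {T : Type*} {S : Finset T} {g : T → EReal}
    (h : ∀ t ∈ S, g t ≠ ⊥) : ∑ t ∈ S, g t ≠ ⊥ := by
  induction S using Finset.cons_induction with
  | empty => simp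
  | cons a s ha ih =>
    rw [Finset.sum_cons, Ne, EReal.add_eq_bot_iff]
    push_neg
    exact ⟨h a (Finset.mem_cons_self a s), ih fun t ht => h t (Finset.mem_cons_of_mem ht)⟩

lemma ereal_sum_ne_top {T : Type*} [DecidableEq T] {S : Finset T} {g : T → EReal}
    (hb : ∀ t ∈ S, g t ≠ ⊥) (hs : ∑ t ∈ S, g t ≠ ⊤) : ∀ t ∈ S, g t ≠ ⊤ := by
  intro t ht htop
  apply hs
  rw [← Finset.add_sum_erase S g ht, htop]
  exact EReal.top_add_of_ne_bot
    (ereal_sum_ne_bot fun u hu => hb u (Finset.mem_of_mem_erase hu))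

lemma ereal_exists_real_lt {a : EReal} (h : a ≠ ⊥) : ∃ r : ℝ, (r : EReal) < a := by
  induction a using EReal.rec with
  | bot => exact absurd rfl h
  | coe x => exact ⟨x - 1, by exact_mod_cast sub_one_lt x⟩
  | top => exact ⟨0, EReal.coe_lt_top 0⟩

lemma ereal_lt_add_split {A B : EReal} (hA : A ≠ ⊥) (hB : B ≠ ⊥) {r : ℝ}
    (h : (r : EReal) < A + B) :
    ∃ α β : ℝ, (α : EReal) < A ∧ (β : EReal) < B ∧ r < α + β := by
  induction A using EReal.rec with
  | bot => exact absurd rfl hA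
  | top =>
    obtain ⟨β, hβ⟩ := ereal_exists_real_lt hB
    exact ⟨r - β + 1, β, EReal.coe_lt_top _, hβ, by linarith⟩
  | coe a =>
    induction B using EReal.rec with
    | bot => exact absurd rfl hB
    | top =>
      refine ⟨a - 1, r - (a - 1) + 1, ?_, EReal.coe_lt_top _, by linarith⟩
      exact_mod_cast sub_one_lt a
    | coe b =>
      rw [← EReal.coe_add, EReal.coe_lt_coe_iff] at h
      refine ⟨a - (a + b - r)/3, b - (a + b - r)/3, ?_, ?_, by linarith⟩
      · exact_mod_cast show a - (a + b - r)/3 < a by linarith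
      · exact_mod_cast show b - (a + b - r)/3 < b by linarith

lemma ereal_exists_real_choice {T : Type*} [DecidableEq T] {S : Finset T} {g : T → EReal}
    (hb : ∀ t ∈ S, g t ≠ ⊥) {r : ℝ} (hr : (r : EReal) < ∑ t ∈ S, g t) :
    ∃ q : T → ℝ, (∀ t ∈ S, (q t : EReal) < g t) ∧ r < ∑ t ∈ S, q t := by
  induction S using Finset.cons_induction generalizing r with
  | empty =>
    refine ⟨fun _ => 0, by simp, ?_⟩
    simp only [Finset.sum_empty] at hr ⊢
    exact_mod_cast hr
  | cons a s ha ih =>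
    rw [Finset.sum_cons] at hr
    have hbs : ∀ t ∈ s, g t ≠ ⊥ := fun t ht => hb t (Finset.mem_cons_of_mem ht)
    obtain ⟨α, β, hα, hβ, hr'⟩ :=
      ereal_lt_add_split (hb a (Finset.mem_cons_self a s)) (ereal_sum_ne_bot hbs) hr
    obtain ⟨q, hq1, hq2⟩ := ih hbs hβ
    refine ⟨Function.update q a α, ?_, ?_⟩
    · intro t ht
      rcases Finset.mem_cons.1 ht with rfl | hts
      · simpa using hα
      · rw [Function.update_of_ne (fun he : t = a => ha (he ▸ hts))]
        exact hq1 t hts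
    · rw [Finset.sum_cons, Function.update_self,
        Finset.sum_congr rfl fun t hts => Function.update_of_ne (fun he : t = a => ha (he ▸ hts)) α q]
      linarith

lemma ereal_le_of_forall_real_gt {a b : EReal} (h : ∀ r : ℝ, b < (r : EReal) → a ≤ (r : EReal)) :
    a ≤ b := by
  by_contra hc
  push_neg at hc
  obtain ⟨q, hbq, hqa⟩ := EReal.lt_iff_exists_rat_btwn.1 hc
  exact absurd (h q hbq) (not_le.2 hqa)

lemma key_lsc_sum {X : Type*} [MetricSpace X] {T : Type*} [DecidableEq T]
    {f : T → X → EReal} (hbot : ∀ t x, f t x ≠ ⊥) (hlsc : ∀ t, LowerSemicontinuous (f t))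
    {S : Finset T} {u : ℕ → T → X} {z : X}
    (hconv : ∀ t ∈ S, Tendsto (fun k => u k t) atTop (nhds z))
    {r : ℝ} (hle : ∀ k, ∑ t ∈ S, f t (u k t) ≤ (r : EReal)) :
    ∑ t ∈ S, f t z ≤ (r : EReal) := by
  by_contra h
  push_neg at h
  obtain ⟨q, hq1, hq2⟩ := ereal_exists_real_choice (fun t _ => hbot t z) h
  have hev : ∀ᶠ k in atTop, ∀ t ∈ S, (q t : EReal) < f t (u k t) := by
    rw [Filter.eventually_all_finset]
    intro t ht
    exact (hconv t ht).eventually (hlsc t z _ (hq1 t ht))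
  obtain ⟨k, hk⟩ := hev.exists
  have hlt : (r : EReal) < ∑ t ∈ S, f t (u k t) := by
    calc (r : EReal) < ((∑ t ∈ S, q t : ℝ) : EReal) := by exact_mod_cast hq2
    _ = ∑ t ∈ S, (q t : EReal) := ereal_coe_sum S q
    _ ≤ ∑ t ∈ S, f t (u k t) := Finset.sum_le_sum fun t ht => (hk t ht).le
  exact absurd (hle k) (not_le.2 hlt)

lemma bound_t0 {X : Type*} {T : Type*} [DecidableEq T]
    {f : T → X → EReal} (hbot : ∀ t x, f t x ≠ ⊥) {t₀ : T} {S : Finset T}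
    (ht₀ : t₀ ∈ S) {x : T → X} {M b : ℝ}
    (hne_top : f t₀ (x t₀) ≠ ⊤)
    (hsum : ∑ t ∈ S, f t (x t) ≤ (M : EReal))
    (hb : (b : EReal) ≤ ∑ t ∈ S.erase t₀, f t (x t)) :
    f t₀ (x t₀) ≤ ((M - b : ℝ) : EReal) := by
  set α := (f t₀ (x t₀)).toReal with hα
  have hcoe : f t₀ (x t₀) = (α : EReal) := (EReal.coe_toReal hne_top (hbot _ _)).symm
  have h1 : ((α + b : ℝ) : EReal) ≤ (M : EReal) := by
    rw [EReal.coe_add]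
    calc (α : EReal) + (b : EReal) ≤ (α : EReal) + ∑ t ∈ S.erase t₀, f t (x t) :=
          add_le_add_right hb _
      _ = ∑ t ∈ S, f t (x t) := by
          rw [← hcoe]; exact Finset.add_sum_erase S (fun t => f t (x t)) ht₀
      _ ≤ (M : EReal) := hsum
  rw [hcoe]
  exact_mod_cast by linarith [EReal.coe_le_coe_iff.1 h1]

lemma conv_subseq {X : Type*} [MetricSpace X] {T : Type*}
    {u : ℕ → T → X} {S : Finset T} {t₀ : T} (ht₀ : t₀ ∈ S)
    (hdiam : ∀ n : ℕ, ∀ t ∈ S, ∀ t' ∈ S, dist (u n t) (u n t') < 1 / (n + 1))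
    {K : Set X} (hK : IsCompact K) (hmem : ∀ n, u n t₀ ∈ K) :
    ∃ z ∈ K, ∃ φ : ℕ → ℕ, StrictMono φ ∧
      ∀ t ∈ S, Tendsto (fun k => u (φ k) t) atTop (nhds z) := by
  obtain ⟨z, hz, φ, hφ, htend⟩ := hK.tendsto_subseq hmem
  refine ⟨z, hz, φ, hφ, fun t ht => ?_⟩
  refine tendsto_iff_dist_tendsto_zero.2
    (squeeze_zero (fun k => dist_nonneg) (g := fun k => 1 / (k + 1) + dist (u (φ k) t₀) z)
      (fun k => ?_) ?_)
  · have h1 : dist (u (φ k) t) (u (φ k) t₀) ≤ 1 / ((φ k : ℝ) + 1) :=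
      (hdiam (φ k) t ht t₀ ht₀).le
    have h2 : (1 : ℝ) / ((φ k : ℝ) + 1) ≤ 1 / ((k : ℝ) + 1) := by
      apply one_div_le_one_div_of_le (by positivity)
      have : k ≤ φ k := hφ.le_apply
      exact_mod_cast Nat.succ_le_succ this
    calc dist (u (φ k) t) z ≤ dist (u (φ k) t) (u (φ k) t₀) + dist (u (φ k) t₀) z :=
        dist_triangle _ _ _
      _ ≤ 1 / ((k : ℝ) + 1) + dist (u (φ k) t₀) z := by linarith
  · have := tendsto_one_div_add_atTop_nhds_zero_nat.add
      (tendsto_iff_dist_tendsto_zero.1 htend)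
    simpa using this

end AuxLemmas

lemma part1_main {X : Type*} [MetricSpace X] {T : Type*} [DecidableEq T]
    (f : T → X → EReal)
    (hbot : ∀ t x, f t x ≠ ⊥)
    (hlsc : ∀ t, LowerSemicontinuous (f t))
    (t₀ : T)
    (hcompact : ∀ c : ℝ, IsCompact {x : X | f t₀ x ≤ (c : EReal)})
    (S : Finset T) (ht₀ : t₀ ∈ S)
    (hLam : LambdaFin (Set.univ : Set X) f (S.erase t₀) ≠ ⊥) :
    (⨅ x : X, ∑ t ∈ S, f t x) ≤ LambdaFin (Set.univ : Set X) f S := by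
  -- extract δ*, b from hLam
  obtain ⟨δs, hδs, hw⟩ : ∃ δ : ℝ, 0 < δ ∧
      (⨅ (x : T → X) (_ : ∀ t ∈ S.erase t₀, x t ∈ (Set.univ : Set X))
        (_ : ∀ t ∈ S.erase t₀, ∀ t' ∈ S.erase t₀, dist (x t) (x t') < δ),
        ∑ t ∈ S.erase t₀, f t (x t)) ≠ ⊥ := by
    by_contra hno
    push_neg at hno
    apply hLam
    refine le_bot_iff.1 (iSup₂_le fun δ hδ => ?_)
    rw [hno δ hδ]
  set b : ℝ := (⨅ (x : T → X) (_ : ∀ t ∈ S.erase t₀, x t ∈ (Set.univ : Set X))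
        (_ : ∀ t ∈ S.erase t₀, ∀ t' ∈ S.erase t₀, dist (x t) (x t') < δs),
        ∑ t ∈ S.erase t₀, f t (x t)).toReal with hbdef
  have hbW : (b : EReal) ≤ ⨅ (x : T → X) (_ : ∀ t ∈ S.erase t₀, x t ∈ (Set.univ : Set X))
        (_ : ∀ t ∈ S.erase t₀, ∀ t' ∈ S.erase t₀, dist (x t) (x t') < δs),
        ∑ t ∈ S.erase t₀, f t (x t) := EReal.coe_toReal_le hw
  have hblow : ∀ x : T → X, (∀ t ∈ S, ∀ t' ∈ S, dist (x t) (x t') < δs) →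
      (b : EReal) ≤ ∑ t ∈ S.erase t₀, f t (x t) := by
    intro x hx
    refine hbW.trans ?_
    refine iInf_le_of_le x (iInf_le_of_le (fun t _ => Set.mem_univ _) (iInf_le _ ?_))
    intro t ht t' ht'
    exact hx t (Finset.mem_of_mem_erase ht) t' (Finset.mem_of_mem_erase ht')
  -- main argument
  apply ereal_le_of_forall_real_gt
  intro r hr
  have hsel : ∀ n : ℕ, ∃ x : T → X,
      (∀ t ∈ S, ∀ t' ∈ S, dist (x t) (x t') < min δs (1 / (n + 1))) ∧
      ∑ t ∈ S, f t (x t) < (r : EReal) := by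
    intro n
    have hpos : 0 < min δs (1 / ((n : ℝ) + 1)) := lt_min hδs (by positivity)
    have hle : (⨅ (x : T → X) (_ : ∀ t ∈ S, x t ∈ (Set.univ : Set X))
        (_ : ∀ t ∈ S, ∀ t' ∈ S, dist (x t) (x t') < min δs (1 / ((n : ℝ) + 1))),
        ∑ t ∈ S, f t (x t)) ≤ LambdaFin (Set.univ : Set X) f S :=
      le_iSup₂ (f := fun (δ : ℝ) (_ : 0 < δ) =>
        ⨅ (x : T → X) (_ : ∀ t ∈ S, x t ∈ (Set.univ : Set X))
          (_ : ∀ t ∈ S, ∀ t' ∈ S, dist (x t) (x t') < δ),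
          ∑ t ∈ S, f t (x t)) (min δs (1 / ((n : ℝ) + 1))) hpos
    have hlt := hle.trans_lt hr
    simp only [iInf_lt_iff] at hlt
    obtain ⟨x, _, hx2, hx3⟩ := hlt
    exact ⟨x, hx2, hx3⟩
  choose u hdiam hsum using hsel
  have hne_top : ∀ n, ∀ t ∈ S, f t (u n t) ≠ ⊤ := fun n =>
    ereal_sum_ne_top (fun t _ => hbot t _) (hsum n).ne_top
  have hmem : ∀ n, u n t₀ ∈ {x : X | f t₀ x ≤ ((r - b : ℝ) : EReal)} := by
    intro n
    exact bound_t0 hbot ht₀ (hne_top n t₀ ht₀) (hsum n).le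
      (hblow (u n) fun t ht t' ht' => (hdiam n t ht t' ht').trans_le (min_le_left _ _))
  obtain ⟨z, _, φ, hφ, hconv⟩ := conv_subseq ht₀
    (fun n t ht t' ht' => (hdiam n t ht t' ht').trans_le (min_le_right _ _))
    (hcompact (r - b)) hmem
  have hfinal : ∑ t ∈ S, f t z ≤ (r : EReal) :=
    key_lsc_sum hbot hlsc hconv (fun k => (hsum (φ k)).le)
  exact iInf_le_of_le z hfinal



lemma part2_main {X : Type*} [MetricSpace X] {T : Type*} [DecidableEq T]
    (f : T → X → EReal)
    (hbot : ∀ t x, f t x ≠ ⊥)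
    (hlsc : ∀ t, LowerSemicontinuous (f t))
    (t₀ : T)
    (hcompact : ∀ c : ℝ, IsCompact {x : X | f t₀ x ≤ (c : EReal)})
    (S : Finset T) (ht₀ : t₀ ∈ S)
    (hLam : LambdaFin (Set.univ : Set X) f (S.erase t₀) ≠ ⊥)
    (hM : (⨅ (δ : ℝ) (_ : 0 < δ),
            ⨆ (x : T → X) (_ : ∀ t ∈ S, f t (x t) ≠ ⊤)
              (_ : ∀ t ∈ S, ∀ t' ∈ S, dist (x t) (x t') < δ),
              ∑ t ∈ S, f t (x t)) < ⊤) :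
    ThetaFinSelf f S ≤ 0 := by
  obtain ⟨δs, hδs, hw⟩ : ∃ δ : ℝ, 0 < δ ∧
      (⨅ (x : T → X) (_ : ∀ t ∈ S.erase t₀, x t ∈ (Set.univ : Set X))
        (_ : ∀ t ∈ S.erase t₀, ∀ t' ∈ S.erase t₀, dist (x t) (x t') < δ),
        ∑ t ∈ S.erase t₀, f t (x t)) ≠ ⊥ := by
    by_contra hno
    push_neg at hno
    apply hLam
    refine le_bot_iff.1 (iSup₂_le fun δ hδ => ?_)
    rw [hno δ hδ]
  set b : ℝ := (⨅ (x : T → X) (_ : ∀ t ∈ S.erase t₀, x t ∈ (Set.univ : Set X))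
        (_ : ∀ t ∈ S.erase t₀, ∀ t' ∈ S.erase t₀, dist (x t) (x t') < δs),
        ∑ t ∈ S.erase t₀, f t (x t)).toReal with hbdef
  have hbW : (b : EReal) ≤ ⨅ (x : T → X) (_ : ∀ t ∈ S.erase t₀, x t ∈ (Set.univ : Set X))
        (_ : ∀ t ∈ S.erase t₀, ∀ t' ∈ S.erase t₀, dist (x t) (x t') < δs),
        ∑ t ∈ S.erase t₀, f t (x t) := EReal.coe_toReal_le hw
  have hblow : ∀ x : T → X, (∀ t ∈ S, ∀ t' ∈ S, dist (x t) (x t') < δs) →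
      (b : EReal) ≤ ∑ t ∈ S.erase t₀, f t (x t) := by
    intro x hx
    refine hbW.trans ?_
    refine iInf_le_of_le x (iInf_le_of_le (fun t _ => Set.mem_univ _) (iInf_le _ ?_))
    intro t ht t' ht'
    exact hx t (Finset.mem_of_mem_erase ht) t' (Finset.mem_of_mem_erase ht')
  have hM' := hM
  simp only [iInf_lt_iff] at hM'
  obtain ⟨δ₁, hδ₁, hV⟩ := hM'
  set M : ℝ := (⨆ (x : T → X) (_ : ∀ t ∈ S, f t (x t) ≠ ⊤)
      (_ : ∀ t ∈ S, ∀ t' ∈ S, dist (x t) (x t') < δ₁),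
      ∑ t ∈ S, f t (x t)).toReal with hMdef
  have hVM : ∀ x : T → X, (∀ t ∈ S, f t (x t) ≠ ⊤) →
      (∀ t ∈ S, ∀ t' ∈ S, dist (x t) (x t') < δ₁) →
      ∑ t ∈ S, f t (x t) ≤ (M : EReal) := by
    intro x h1 h2
    refine le_trans ?_ (EReal.le_coe_toReal hV.ne)
    exact le_iSup_of_le x (le_iSup_of_le h1 (le_iSup_of_le h2 le_rfl))
  apply ereal_le_of_forall_real_gt
  intro ε hε0
  have hε : (0:ℝ) < ε := by exact_mod_cast hε0
  have hG : ∃ δ : ℝ, 0 < δ ∧ ∀ x : T → X, (∀ t ∈ S, f t (x t) ≠ ⊤) →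
      (∀ t ∈ S, ∀ t' ∈ S, dist (x t) (x t') < δ) →
      ∃ y : X, (∀ t ∈ S, dist y (x t) ≤ ε) ∧
        (∑ t ∈ S, (f t y - f t (x t))) ≤ (ε : EReal) := by
    by_contra hng
    push_neg at hng
    have hsel : ∀ n : ℕ, ∃ x : T → X, (∀ t ∈ S, f t (x t) ≠ ⊤) ∧
        (∀ t ∈ S, ∀ t' ∈ S, dist (x t) (x t') < min (min δs δ₁) (1/((n:ℝ)+1))) ∧
        ∀ y : X, (∀ t ∈ S, dist y (x t) ≤ ε) →
          (ε : EReal) < ∑ t ∈ S, (f t y - f t (x t)) := by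
      intro n
      exact hng _ (lt_min (lt_min hδs hδ₁) (by positivity))
    choose u hu1 hu2 hu3 using hsel
    have hsum : ∀ n, ∑ t ∈ S, f t (u n t) ≤ (M : EReal) := fun n =>
      hVM (u n) (hu1 n) (fun t ht t' ht' =>
        (hu2 n t ht t' ht').trans_le ((min_le_left _ _).trans (min_le_right _ _)))
    have hmem : ∀ n, u n t₀ ∈ {x : X | f t₀ x ≤ ((M - b : ℝ) : EReal)} := fun n =>
      bound_t0 hbot ht₀ (hu1 n t₀ ht₀) (hsum n)
        (hblow (u n) fun t ht t' ht' =>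
          (hu2 n t ht t' ht').trans_le ((min_le_left _ _).trans (min_le_left _ _)))
    obtain ⟨z, _, φ, hφ, hconv⟩ := conv_subseq ht₀
      (fun n t ht t' ht' => (hu2 n t ht t' ht').trans_le (min_le_right _ _))
      (hcompact (M - b)) hmem
    have hSz : ∑ t ∈ S, f t z ≤ (M : EReal) :=
      key_lsc_sum hbot hlsc hconv (fun k => hsum (φ k))
    have hfz : ∀ t ∈ S, f t z ≠ ⊤ :=
      ereal_sum_ne_top (fun t _ => hbot t z) (hSz.trans_lt (EReal.coe_lt_top M)).ne
    have hcard : (0:ℝ) < (S.card : ℝ) := by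
      exact_mod_cast Finset.card_pos.2 ⟨t₀, ht₀⟩
    set ε1 : ℝ := ε / S.card with hε1def
    have hε1 : 0 < ε1 := div_pos hε hcard
    have E1 : ∀ᶠ k in atTop, ∀ t ∈ S, dist z (u (φ k) t) ≤ ε := by
      rw [Filter.eventually_all_finset]
      intro t ht
      have hd := tendsto_iff_dist_tendsto_zero.1 (hconv t ht)
      filter_upwards [hd.eventually_le_const hε] with k hk
      rw [dist_comm]; exact hk
    have E2 : ∀ᶠ k in atTop, ∀ t ∈ S,
        (((f t z).toReal - ε1 : ℝ) : EReal) < f t (u (φ k) t) := by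
      rw [Filter.eventually_all_finset]
      intro t ht
      have hlt : (((f t z).toReal - ε1 : ℝ) : EReal) < f t z := by
        conv_rhs => rw [← EReal.coe_toReal (hfz t ht) (hbot t z)]
        exact_mod_cast sub_lt_self _ hε1
      exact (hconv t ht).eventually (hlsc t z _ hlt)
    obtain ⟨k, hk1, hk2⟩ := (E1.and E2).exists
    have hcontr := hu3 (φ k) z hk1
    have heq : ∀ t ∈ S, f t z - f t (u (φ k) t) =
        (((f t z).toReal - (f t (u (φ k) t)).toReal : ℝ) : EReal) := by
      intro t ht
      rw [EReal.coe_sub, EReal.coe_toReal (hfz t ht) (hbot t z),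
        EReal.coe_toReal (hu1 (φ k) t ht) (hbot _ _)]
    have hsumeq : ∑ t ∈ S, (f t z - f t (u (φ k) t)) =
        ((∑ t ∈ S, ((f t z).toReal - (f t (u (φ k) t)).toReal) : ℝ) : EReal) := by
      rw [Finset.sum_congr rfl heq, ereal_coe_sum]
    have hreal : ∑ t ∈ S, ((f t z).toReal - (f t (u (φ k) t)).toReal) ≤ ε := by
      calc ∑ t ∈ S, ((f t z).toReal - (f t (u (φ k) t)).toReal) ≤ ∑ _t ∈ S, ε1 := by
            apply Finset.sum_le_sum
            intro t ht
            have h2 := hk2 t ht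
            rw [← EReal.coe_toReal (hu1 (φ k) t ht) (hbot _ _)] at h2
            have h3 := EReal.coe_lt_coe_iff.1 h2
            linarith
        _ = S.card • ε1 := Finset.sum_const _
        _ = ε := by
            rw [nsmul_eq_mul, hε1def, mul_comm, div_mul_cancel₀ _ (ne_of_gt hcard)]
    rw [hsumeq] at hcontr
    exact absurd hcontr (not_lt.2 (by exact_mod_cast hreal))
  obtain ⟨δ, hδ, hgood⟩ := hG
  refine iInf₂_le_of_le δ hδ ?_
  refine iSup_le fun x => iSup_le fun h1 => iSup_le fun h2 => ?_
  obtain ⟨y, hy1, hy2⟩ := hgood x h1 h2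
  refine iInf_le_of_le y (max_le ?_ hy2)
  exact iSup₂_le fun t ht => by exact_mod_cast hy1 t ht


lemma theta_nonneg {X : Type*} [MetricSpace X] {T : Type*}
    (f : T → X → EReal) (xh : X) (hxh : ∀ t, f t xh ≠ ⊤) (A : Finset T) :
    (0 : EReal) ≤ ThetaFinSelf f A := by
  refine le_iInf fun δ => le_iInf fun hδ => ?_
  refine le_iSup_of_le (fun _ => xh) ?_
  refine le_iSup_of_le (fun t _ => hxh t) ?_
  refine le_iSup_of_le (fun t _ t' _ => by simpa using hδ) ?_
  refine le_iInf fun y => ?_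
  rcases A.eq_empty_or_nonempty with rfl | ⟨t₁, ht₁⟩
  · simp
  · refine le_max_of_le_left ?_
    refine le_trans ?_ (le_iSup₂ (f := fun t (_ : t ∈ A) => ((dist y xh : ℝ) : EReal)) t₁ ht₁)
    exact_mod_cast dist_nonneg

/-- Inf-compactness sufficient conditions: lower semicontinuity plus compactness of the
sublevel sets of `f_{t₀}` and `Λ({f_t}_{t∈S∖{t₀}}) > −∞` give `Δ({f_t}_{t∈T}) ≤ 0`;
under the additional boundedness condition, `limsup_{S↑T} Θ({f_t}_{t∈S}) = 0`. -/
theorem inf_compactness_sufficient_conditions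
    {X : Type*} [MetricSpace X] {T : Type*} [Nonempty T] [DecidableEq T]
    (f : T → X → EReal)
    (hbot : ∀ t x, f t x ≠ ⊥)
    (hdom : ∃ x : X, ∀ t, f t x ≠ ⊤)
    (hbdd : ∀ S : Finset T, (⨅ x : X, ∑ t ∈ S, f t x) ≠ ⊥)
    (hlsc : ∀ t, LowerSemicontinuous (f t))
    (t₀ : T) (S₀ : Finset T)
    (hcompact : ∀ c : ℝ, IsCompact {x : X | f t₀ x ≤ (c : EReal)})
    (hLam : ∀ S : Finset T, insert t₀ S₀ ⊆ S →
      LambdaFin (Set.univ : Set X) f (S.erase t₀) ≠ ⊥) :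
    limsupF (fun S =>
        (⨅ x : X, ∑ t ∈ S, f t x) - LambdaFin (Set.univ : Set X) f S) ≤ 0 ∧
      ((∀ S : Finset T, insert t₀ S₀ ⊆ S →
          (⨅ (δ : ℝ) (_ : 0 < δ),
            ⨆ (x : T → X) (_ : ∀ t ∈ S, f t (x t) ≠ ⊤)
              (_ : ∀ t ∈ S, ∀ t' ∈ S, dist (x t) (x t') < δ),
              ∑ t ∈ S, f t (x t)) < ⊤) →
        limsupF (fun S => ThetaFinSelf f S) = 0) := by
  constructor
  · refine iInf_le_of_le (insert t₀ S₀) (iSup₂_le fun S hS => ?_)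
    have h1 := part1_main f hbot hlsc t₀ hcompact S (hS (Finset.mem_insert_self t₀ S₀)) (hLam S hS)
    rw [EReal.sub_le_iff_le_add (Or.inr (by simp)) (Or.inr (by simp)), zero_add]
    exact h1
  · intro hMall
    obtain ⟨xh, hxh⟩ := hdom
    refine le_antisymm ?_ ?_
    · refine iInf_le_of_le (insert t₀ S₀) (iSup₂_le fun S hS => ?_)
      exact part2_main f hbot hlsc t₀ hcompact S (hS (Finset.mem_insert_self t₀ S₀))
        (hLam S hS) (hMall S hS)
    · refine le_iInf fun A => ?_
      exact le_iSup₂_of_le A (subset_refl A) (theta_nonneg f xh hxh A)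

end
end

section
/- Unconstrained-minimization characterization of firm quasiuniform lower semicontinuity: let U ⊆ X. The family {f_t}_{t∈T} is firmly quasiuniformly lower semicontinuous on U if and only if sup over V ∈ EI(U) of limsup_{S↑T} [ inf over δ > 0 of the supremum, over all choices x_t ∈ dom f_t ∩ V (t ∈ S) with diam{x_t}_{t∈S} < δ, of inf over x ∈ X of max( max_{t∈S} d(x, x_t), (Σ̄_{t∈T} f_t)(x) − Σ_{t∈S} f_t(x_t) ) ] = 0, i.e., the defining condition holds with the inner infimum taken over all of X instead of over U. -/
open scoped BigOperators
open Filter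

noncomputable section

/-!
If `V` is `ρ`-essentially interior in `U`, `x_{t₀} ∈ V` and `y ∉ U`, then `d(y, x_{t₀}) ≥ ρ`,
so the quantity being minimised is at least `ρ` at every `y ∉ U`. Hence enlarging the inner
infimum from `U` to `X` can only lower a value down to `min ρ (·)` of itself:
`min(ρ, Θ^U) ≤ Θ^X ≤ Θ^U`, and this survives the upper limit over `S`. A supremum of such pairs
`Θ^X ≤ Θ^U` then agrees as soon as either side is `≤ 0`.
-/

open Set Metric

lemma biSup_eq_biSup_of_min_le {α ι : Type*} [CompleteLinearOrder α] {s : Set ι} {a b : ι → α}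
    {c : α} (hba : ∀ i ∈ s, b i ≤ a i) (hab : ∀ i ∈ s, ∃ ρ, c < ρ ∧ min ρ (a i) ≤ b i)
    (hc : ⨆ i ∈ s, b i ≤ c) : ⨆ i ∈ s, a i = ⨆ i ∈ s, b i := by
  refine le_antisymm (iSup₂_le fun i hi => ?_) (iSup₂_mono hba)
  obtain ⟨ρ, hcρ, hρ⟩ := hab i hi
  have hbi : b i ≤ ⨆ i ∈ s, b i := le_iSup₂ (f := fun i _ => b i) i hi
  rcases min_le_iff.mp hρ with h | h
  · exact absurd (h.trans (hbi.trans hc)) hcρ.not_ge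
  · exact h.trans hbi

lemma limsupF_mono {T : Type*} {a b : Finset T → EReal} (h : ∀ S, a S ≤ b S) :
    limsupF a ≤ limsupF b :=
  iInf_mono fun _ => iSup₂_mono fun S _ => h S

lemma min_limsupF_le {T : Type*} {ρ : EReal} {a b : Finset T → EReal} (t₀ : T)
    (h : ∀ S, t₀ ∈ S → min ρ (a S) ≤ b S) : min ρ (limsupF a) ≤ limsupF b := by
  classical
  unfold limsupF
  refine le_iInf fun S₀ => (min_le_min_left _ (iInf_le _ (insert t₀ S₀))).trans ?_
  change ρ ⊓ _ ≤ _
  simp only [inf_iSup_eq]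
  exact iSup₂_le fun S hS => le_iSup₂_of_le S ((Finset.subset_insert _ _).trans hS)
    (h S (hS (Finset.mem_insert_self _ _)))

lemma le_dist_of_biUnion_ball_subset {X : Type*} [MetricSpace X] {V U : Set X} {ρ : ℝ}
    (hρ : ⋃ x ∈ V, ball x ρ ⊆ U) {x y : X} (hx : x ∈ V) (hy : y ∉ U) : ρ ≤ dist y x := by
  by_contra! h
  exact hy (hρ (mem_biUnion hx (mem_ball.mpr h)))

section ThetaFin2

variable {T X : Type*} [MetricSpace X] (f : T → X → EReal)

lemma ThetaFin2_le_of_subset {V U U' : Set X} (h : U ⊆ U') (S : Finset T) :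
    ThetaFin2 V U' f S ≤ ThetaFin2 V U f S := by
  unfold ThetaFin2
  gcongr
  exact le_iInf fun hy => iInf_le _ (h hy)

lemma min_le_ThetaFin2_univ {V U : Set X} {ρ : ℝ} (hρ : ⋃ x ∈ V, ball x ρ ⊆ U) {t₀ : T}
    {S : Finset T} (ht₀ : t₀ ∈ S) :
    min (ρ : EReal) (ThetaFin2 V U f S) ≤ ThetaFin2 V univ f S := by
  refine le_iInf₂ fun δ hδ => (min_le_min_left _ (iInf₂_le δ hδ)).trans ?_
  change (ρ : EReal) ⊓ _ ≤ _
  simp only [inf_iSup_eq]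
  refine iSup_mono fun x => iSup_mono fun hx => iSup_mono fun _ => le_iInf₂ fun y _ => ?_
  by_cases hy : y ∈ U
  · exact inf_le_right.trans (iInf₂_le y hy)
  · have hdist : (ρ : EReal) ≤ dist y (x t₀) :=
      EReal.coe_le_coe_iff.mpr (le_dist_of_biUnion_ball_subset hρ (hx t₀ ht₀).1 hy)
    exact inf_le_left.trans (hdist.trans ((le_iSup₂ (f := fun t (_ : t ∈ S) =>
      (dist y (x t) : EReal)) t₀ ht₀).trans (le_max_left _ _)))

end ThetaFin2

theorem firm_quasiuniform_lsc_iff_unconstrained_general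
    {X : Type*} [MetricSpace X] {T : Type*} [Nonempty T]
    (f : T → X → EReal) (U : Set X)
 :
    ThetaDag U f = 0 ↔
      (⨆ V ∈ EI U, limsupF (fun S => ThetaFin2 V (Set.univ : Set X) f S)) = 0 := by
  obtain ⟨t₀⟩ := ‹Nonempty T›
  have hle : ∀ V ∈ EI U, limsupF (fun S => ThetaFin2 V univ f S) ≤
      limsupF (fun S => ThetaFin2 V U f S) :=
    fun V _ => limsupF_mono fun S => ThetaFin2_le_of_subset f (subset_univ U) S
  have hmin : ∀ V ∈ EI U, ∃ ρ : EReal, 0 < ρ ∧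
      min ρ (limsupF fun S => ThetaFin2 V U f S) ≤ limsupF fun S => ThetaFin2 V univ f S := by
    rintro V ⟨-, ρ, hρ, hV⟩
    exact ⟨ρ, EReal.coe_pos.mpr hρ, min_limsupF_le t₀ fun S hS => min_le_ThetaFin2_univ f hV hS⟩
  rw [ThetaDag]
  constructor
  · intro h
    exact (biSup_eq_biSup_of_min_le hle hmin ((iSup₂_mono hle).trans h.le)).symm.trans h
  · intro h
    exact (biSup_eq_biSup_of_min_le hle hmin h.le).trans h

/-- Unconstrained-minimization characterization of firm quasiuniform lower
semicontinuity: `Θ†_U({f_t}) = 0` iff the corresponding quantity with the inner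
infimum taken over all of `X` instead of `U` vanishes. -/
theorem firm_quasiuniform_lsc_iff_unconstrained
    {X : Type*} [MetricSpace X] {T : Type*} [Nonempty T]
    (f : T → X → EReal) (U : Set X)
    (hbot : ∀ t x, f t x ≠ ⊥)
    (hdom : ∃ x : X, upperSum f x ≠ ⊤)
    (hbdd : ∀ S : Finset T, (⨅ x : X, ∑ t ∈ S, f t x) ≠ ⊥)
 :
    ThetaDag U f = 0 ↔
      (⨆ V ∈ EI U, limsupF (fun S => ThetaFin2 V (Set.univ : Set X) f S)) = 0 :=
  firm_quasiuniform_lsc_iff_unconstrained_general f U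

end
end
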